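/- arXiv:2307.15825 — 10 statements merged into one kernel-verified Lean document; each statement's English description precedes it below -/
import Mathlib

section
/- Define OCPS(n, p) = ∑_{k=0}^{p-1} (-1)^{p-1-k} C(p-1, k) C(n-1+2k, 2k) for positive integers n, p. Then for all positive integers n and p, the recurrence n · OCPS(n+1, p+1) = 2p · OCPS(n, p) + (n+2p) · OCPS(n, p+1) holds. -/
open Finset

/-- The number of order-consecutive partition sequences of `{1, …, n}` into `p` parts. -/
def OCPS (n p : ℕ) : ℤ :=
  ∑ k ∈ Finset.range p,
    (-1 : ℤ) ^ (p - 1 - k) * ((p - 1).choose k : ℤ) * ((n - 1 + 2 * k).choose (2 * k) : ℤ)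

lemma fact1 (n k : ℕ) (hn : 1 ≤ n) :
    (n : ℤ) * ((n + 2 * k).choose (2 * k) : ℤ)
      = ((n : ℤ) + 2 * k) * ((n - 1 + 2 * k).choose (2 * k) : ℤ) := by
  obtain ⟨m, rfl⟩ := Nat.exists_eq_add_of_le hn
  have e1 : (m + 2 * k + 1).choose (m + 1) = (m + 2 * k + 1).choose (2 * k) := by
    have := Nat.choose_symm (n := m + 2 * k + 1) (k := 2 * k) (by omega)
    simpa [show m + 2 * k + 1 - 2 * k = m + 1 by omega] using this
  have e2 : (m + 2 * k).choose m = (m + 2 * k).choose (2 * k) := by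
    have := Nat.choose_symm (n := m + 2 * k) (k := 2 * k) (by omega)
    simpa [show m + 2 * k - 2 * k = m by omega] using this
  have h := Nat.add_one_mul_choose_eq (m + 2 * k) m
  rw [e2, e1] at h
  -- h : (m + 2*k + 1) * (m+2*k).choose (2k) = (m+2*k+1).choose (2k) * (m+1)
  have hn1 : 1 + m - 1 = m := by omega
  have hs : 1 + m + 2 * k = m + 2 * k + 1 := by ring
  rw [hn1, hs]
  push_cast
  linarith [h]

lemma fact2 (p k : ℕ) (hk : k < p) :
    ((p : ℤ) - k) * (p.choose k : ℤ) = (p : ℤ) * ((p - 1).choose k : ℤ) := by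
  obtain ⟨q, rfl⟩ : ∃ q, p = q + 1 := ⟨p - 1, by omega⟩
  have hk' : k ≤ q := by omega
  have h1 := Nat.choose_succ_right_eq (q + 1) k
  -- (q+1).choose (k+1) * (k+1) = (q+1).choose k * (q+1 - k)
  have h2 := Nat.add_one_mul_choose_eq q k
  -- (q+1) * q.choose k = (q+1).choose (k+1) * (k+1)
  have hnat : (q + 1 - k) * (q + 1).choose k = (q + 1) * q.choose k := by
    rw [h2, h1]; ring
  have hsub : q + 1 - 1 = q := rfl
  rw [hsub]
  zify [show k ≤ q + 1 by omega] at hnat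
  push_cast; linarith [hnat]

theorem OCPS_recurrence (n p : ℕ) (hn : 1 ≤ n) (hp : 1 ≤ p) :
    (n : ℤ) * OCPS (n + 1) (p + 1) =
      2 * (p : ℤ) * OCPS n p + ((n : ℤ) + 2 * p) * OCPS n (p + 1) := by
  unfold OCPS
  simp only [Nat.add_sub_cancel]
  rw [Finset.mul_sum, Finset.mul_sum, Finset.mul_sum]
  have key : ∑ k ∈ Finset.range (p + 1),
      ((n : ℤ) * ((-1 : ℤ) ^ (p - k) * (p.choose k : ℤ) * ((n + 2 * k).choose (2 * k) : ℤ))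
        - ((n : ℤ) + 2 * p) * ((-1 : ℤ) ^ (p - k) * (p.choose k : ℤ) * ((n - 1 + 2 * k).choose (2 * k) : ℤ)))
      = ∑ k ∈ Finset.range p,
      2 * (p : ℤ) * ((-1 : ℤ) ^ (p - 1 - k) * ((p - 1).choose k : ℤ) * ((n - 1 + 2 * k).choose (2 * k) : ℤ)) := by
    rw [Finset.sum_range_succ]
    have hlast : (n : ℤ) * ((-1 : ℤ) ^ (p - p) * (p.choose p : ℤ) * ((n + 2 * p).choose (2 * p) : ℤ))
        - ((n : ℤ) + 2 * p) * ((-1 : ℤ) ^ (p - p) * (p.choose p : ℤ) * ((n - 1 + 2 * p).choose (2 * p) : ℤ)) = 0 := by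
      have := fact1 n p hn
      simp [Nat.sub_self]
      linarith [this]
    rw [hlast, add_zero]
    apply Finset.sum_congr rfl
    intro k hk
    rw [Finset.mem_range] at hk
    have hpk : p - k = (p - 1 - k) + 1 := by omega
    have h1 := fact1 n k hn
    have h2 := fact2 p k hk
    rw [hpk, pow_succ]
    have expand : (n : ℤ) * ((-1 : ℤ) ^ (p - 1 - k) * (-1) * (p.choose k : ℤ) * ((n + 2 * k).choose (2 * k) : ℤ))
        - ((n : ℤ) + 2 * p) * ((-1 : ℤ) ^ (p - 1 - k) * (-1) * (p.choose k : ℤ) * ((n - 1 + 2 * k).choose (2 * k) : ℤ))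
        = (-1 : ℤ) ^ (p - 1 - k) * (p.choose k : ℤ) *
            (((n : ℤ) + 2 * p) * ((n - 1 + 2 * k).choose (2 * k) : ℤ)
              - (n : ℤ) * ((n + 2 * k).choose (2 * k) : ℤ)) := by ring
    rw [expand, h1]
    have : ((n : ℤ) + 2 * p) * ((n - 1 + 2 * k).choose (2 * k) : ℤ)
        - ((n : ℤ) + 2 * k) * ((n - 1 + 2 * k).choose (2 * k) : ℤ)
        = 2 * (((p : ℤ) - k) * ((n - 1 + 2 * k).choose (2 * k) : ℤ)) := by ring
    rw [this]
    calc (-1 : ℤ) ^ (p - 1 - k) * (p.choose k : ℤ) * (2 * (((p : ℤ) - k) * ((n - 1 + 2 * k).choose (2 * k) : ℤ)))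
        = 2 * ((((p : ℤ) - k) * (p.choose k : ℤ)) * ((-1 : ℤ) ^ (p - 1 - k) * ((n - 1 + 2 * k).choose (2 * k) : ℤ))) := by ring
      _ = 2 * (((p : ℤ) * ((p - 1).choose k : ℤ)) * ((-1 : ℤ) ^ (p - 1 - k) * ((n - 1 + 2 * k).choose (2 * k) : ℤ))) := by rw [h2]
      _ = 2 * (p : ℤ) * ((-1 : ℤ) ^ (p - 1 - k) * ((p - 1).choose k : ℤ) * ((n - 1 + 2 * k).choose (2 * k) : ℤ)) := by ring
  rw [Finset.sum_sub_distrib] at key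
  linarith [key]
end

section
/- Define OCPS(n, p) = ∑_{k=0}^{p-1} (-1)^{p-1-k} C(p-1, k) C(n-1+2k, 2k). Then OCPS(n+1, p+1) = 0 whenever p > n; that is, for fixed n the generating function g_n(y) = ∑_{p≥0} OCPS(n+1, p+1) y^p is a polynomial of degree at most n. -/
open Finset fwdDiff

open Polynomial in
lemma fwdDiff_iter_eval_eq_zero (p : ℕ) (P : ℚ[X]) (hP : P.degree < (p : ℕ)) :
    (fwdDiff (1:ℕ))^[p] (fun k : ℕ ↦ P.eval (k : ℚ)) = 0 := by
  induction p generalizing P with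
  | zero =>
    have : P = 0 := by
      rw [← Polynomial.degree_eq_bot]
      exact Nat.WithBot.lt_zero_iff.mp (by exact_mod_cast hP)
    subst this
    funext k
    simp
  | succ p ih =>
    rw [Function.iterate_succ_apply]
    have hdiff : fwdDiff (1:ℕ) (fun k : ℕ ↦ P.eval (k : ℚ))
        = fun k : ℕ ↦ (P.comp (X + C 1) - P).eval (k : ℚ) := by
      funext k
      simp only [fwdDiff, Polynomial.eval_sub, Polynomial.eval_comp, Polynomial.eval_add,
        Polynomial.eval_X, Polynomial.eval_C]
      push_cast
      ring
    rw [hdiff]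
    apply ih
    rcases eq_or_ne P 0 with rfl | hP0
    · simp only [Polynomial.zero_comp, sub_zero, Polynomial.degree_zero]
      exact WithBot.bot_lt_coe p
    · have hmon : (X + C 1 : ℚ[X]).Monic := Polynomial.monic_X_add_C 1
      have hdeg1 : (X + C 1 : ℚ[X]).natDegree = 1 := Polynomial.natDegree_X_add_C 1
      have hl : (P.comp (X + C 1)).leadingCoeff = P.leadingCoeff := by
        rw [Polynomial.leadingCoeff_comp (by rw [hdeg1]; norm_num), hmon.leadingCoeff,
          one_pow, mul_one]
      have hne : P.comp (X + C 1) ≠ 0 := by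
        intro h
        rw [h, Polynomial.leadingCoeff_zero] at hl
        exact hP0 (Polynomial.leadingCoeff_eq_zero.mp hl.symm)
      have hd : (P.comp (X + C 1)).degree = P.degree := by
        rw [Polynomial.degree_eq_natDegree hne, Polynomial.degree_eq_natDegree hP0,
          Polynomial.natDegree_comp, hdeg1, mul_one]
      have hlt := Polynomial.degree_sub_lt hd hne hl
      rw [hd] at hlt
      calc (P.comp (X + C 1) - P).degree < P.degree := hlt
        _ ≤ (p : ℕ) := by
          have hnat : P.natDegree < p + 1 :=
            (Polynomial.natDegree_lt_iff_degree_lt hP0).mpr (by exact_mod_cast hP)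
          exact Polynomial.degree_le_natDegree.trans
            (by exact_mod_cast Nat.lt_succ_iff.mp hnat)

theorem OCPS_eq_zero_of_gt (n p : ℕ) (h : p > n) : OCPS (n + 1) (p + 1) = 0 := by
  classical
  -- the polynomial (1/n!) * ascPochhammer(2X+1, n), whose value at k is C(n+2k, 2k)
  set P : Polynomial ℚ := Polynomial.C ((n.factorial : ℚ)⁻¹) *
      (ascPochhammer ℚ n).comp (Polynomial.C 2 * Polynomial.X + Polynomial.C 1) with hPdef
  have hevalP : ∀ k : ℕ, P.eval (k : ℚ) = ((n + 2 * k).choose (2 * k) : ℚ) := by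
    intro k
    have hsymm : (n + 2 * k).choose (2 * k) = (n + 2 * k).choose n := by
      have := Nat.choose_symm (Nat.le_add_left (2 * k) n)
      rw [Nat.add_sub_cancel] at this
      exact this.symm
    have hasc : (2 * k + 1).ascFactorial n = n.factorial * (2 * k + n).choose n :=
      Nat.ascFactorial_eq_factorial_mul_choose (2 * k) n
    have heval2 : (ascPochhammer ℚ n).eval ((2 * k + 1 : ℕ) : ℚ)
        = ((2 * k + 1).ascFactorial n : ℚ) := by
      rw [← ascPochhammer_eval_cast, ascPochhammer_nat_eq_ascFactorial]
    rw [hPdef]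
    simp only [Polynomial.eval_mul, Polynomial.eval_C, Polynomial.eval_comp,
      Polynomial.eval_add, Polynomial.eval_X]
    have : (2 : ℚ) * (k : ℚ) + 1 = ((2 * k + 1 : ℕ) : ℚ) := by push_cast; ring
    rw [this, heval2, hasc, hsymm]
    have hfac : (n.factorial : ℚ) ≠ 0 := by exact_mod_cast n.factorial_ne_zero
    push_cast
    field_simp
    ring_nf
  have hdeg : P.degree < (p : ℕ) := by
    have hnd : P.natDegree ≤ n := by
      refine le_trans (Polynomial.natDegree_mul_le) ?_
      simp only [Polynomial.natDegree_C, zero_add]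
      refine le_trans (Polynomial.natDegree_comp_le) ?_
      rw [ascPochhammer_natDegree, Polynomial.natDegree_linear (by norm_num : (2:ℚ) ≠ 0),
        mul_one]
    calc P.degree ≤ (P.natDegree : WithBot ℕ) := Polynomial.degree_le_natDegree
      _ < (p : ℕ) := by exact_mod_cast lt_of_le_of_lt hnd h
  have hzero := congrFun (fwdDiff_iter_eval_eq_zero p P hdeg) 0
  rw [fwdDiff_iter_eq_sum_shift] at hzero
  simp only [smul_eq_mul, zero_add, smul_eq_mul, mul_one, Pi.zero_apply] at hzero
  -- hzero : ∑ k in range (p+1), ((-1)^(p-k) * C(p,k) : ℤ) • P.eval (k*1) = 0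
  have key : (∑ k ∈ Finset.range (p + 1),
      (-1 : ℚ) ^ (p - k) * (p.choose k : ℚ) * ((n + 2 * k).choose (2 * k) : ℚ)) = 0 := by
    rw [← hzero]
    refine Finset.sum_congr rfl fun k _ ↦ ?_
    rw [hevalP]
    simp only [zsmul_eq_mul]
    push_cast
    ring
  have cast_eq : ((OCPS (n + 1) (p + 1) : ℤ) : ℚ)
      = ∑ k ∈ Finset.range (p + 1),
        (-1 : ℚ) ^ (p - k) * (p.choose k : ℚ) * ((n + 2 * k).choose (2 * k) : ℚ) := by
    rw [OCPS]
    push_cast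
    refine Finset.sum_congr rfl fun k _ ↦ ?_
    norm_num
  have : ((OCPS (n + 1) (p + 1) : ℤ) : ℚ) = 0 := by rw [cast_eq, key]
  exact_mod_cast this
end

section
/- The formal power series G(x, y) = (1-x)/(1 - 2x(1+y) + x²(1+y)) in x with polynomial coefficients in y satisfies: the coefficient of xⁿ yᵖ in G equals OCPS(n+1, p+1) = ∑_{k=0}^{p} (-1)^{p-k} C(p, k) C(n+2k, 2k) for all natural numbers n, p. -/
open Finset PowerSeries

/-- `OCPS' n p = OCPS(n+1, p+1)`, the number of order-consecutive partition sequences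
of `{1, …, n+1}` into `p+1` parts. -/
def OCPS' (n p : ℕ) : ℤ :=
  ∑ k ∈ Finset.range (p + 1),
    (-1 : ℤ) ^ (p - k) * (p.choose k : ℤ) * ((n + 2 * k).choose (2 * k) : ℤ)

lemma neg_one_pow_sub' (p j : ℕ) (h : j ≤ p) : ((-1 : ℤ)) ^ (p - j) = (-1) ^ (p + j) := by
  have : p + j = (p - j) + 2 * j := by omega
  rw [this, pow_add, pow_mul]; norm_num

lemma pasc2 (m j : ℕ) :
    ((m + 2).choose (j + 2) : ℤ) - 2 * ((m + 1).choose (j + 2)) + (m.choose (j + 2))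
      = m.choose j := by
  have h1 := Nat.choose_succ_succ (m + 1) (j + 1)
  have h2 := Nat.choose_succ_succ m (j + 1)
  have h3 := Nat.choose_succ_succ m j
  push_cast [h1, h2, h3]; ring

lemma comb (f₁ f₂ f₃ f₄ f₅ : ℕ → ℤ) (c : ℤ) (s : Finset ℕ) :
    ((∑ j ∈ s, f₁ j + c) - 2 * (∑ j ∈ s, f₂ j + c) + (∑ j ∈ s, f₃ j + c)
        - 2 * (∑ j ∈ s, f₄ j) + ∑ j ∈ s, f₅ j)
      = ∑ j ∈ s, (f₁ j - 2 * f₂ j + f₃ j - 2 * f₄ j + f₅ j) := by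
  rw [show (∑ j ∈ s, (f₁ j - 2 * f₂ j + f₃ j - 2 * f₄ j + f₅ j))
      = ∑ j ∈ s, f₁ j - 2 * ∑ j ∈ s, f₂ j + ∑ j ∈ s, f₃ j - 2 * ∑ j ∈ s, f₄ j
        + ∑ j ∈ s, f₅ j from by
    simp [Finset.sum_sub_distrib, Finset.sum_add_distrib, ← Finset.mul_sum]]
  ring

lemma OCPS'_rec (n p : ℕ) :
    OCPS' (n+2) (p+1) - 2 * OCPS' (n+1) (p+1) + OCPS' n (p+1)
      - 2 * OCPS' (n+1) p + OCPS' n p = 0 := by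
  have peel : ∀ m : ℕ, OCPS' m (p+1)
      = ∑ j ∈ range (p+1),
          (-1:ℤ)^(p-j) * (((p+1).choose (j+1) : ℤ)) * (((m + 2*(j+1)).choose (2*(j+1)) : ℤ))
        + (-1:ℤ)^(p+1) := by
    intro m
    rw [OCPS', Finset.sum_range_succ']
    simp
  rw [peel, peel, peel]
  unfold OCPS'
  rw [comb]
  set g : ℕ → ℤ := fun j =>
    (-1:ℤ)^(p+j) * (p.choose j : ℤ) *
      (((n+2*j+2).choose (2*j) : ℤ) - 2*((n+2*j+1).choose (2*j) : ℤ)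
        + ((n+2*j).choose (2*j) : ℤ)) with hgdef
  have termwise : ∀ j ∈ range (p+1),
      (-1:ℤ)^(p-j) * (((p+1).choose (j+1) : ℤ)) * (((n+2+2*(j+1)).choose (2*(j+1)) : ℤ))
        - 2 * ((-1:ℤ)^(p-j) * (((p+1).choose (j+1) : ℤ)) * (((n+1+2*(j+1)).choose (2*(j+1)) : ℤ)))
        + (-1:ℤ)^(p-j) * (((p+1).choose (j+1) : ℤ)) * (((n+2*(j+1)).choose (2*(j+1)) : ℤ))
        - 2 * ((-1:ℤ)^(p-j) * ((p.choose j : ℤ)) * (((n+1+2*j).choose (2*j) : ℤ)))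
        + (-1:ℤ)^(p-j) * ((p.choose j : ℤ)) * (((n+2*j).choose (2*j) : ℤ))
      = g j - g (j+1) := by
    intro j hj
    rw [mem_range] at hj
    have hjp : j ≤ p := by omega
    rw [neg_one_pow_sub' p j hjp]
    simp only [hgdef]
    simp only [show (2:ℕ)*(j+1) = 2*j+2 from by ring]
    simp only [show n+2+(2*j+2) = n+2*j+2+2 from by ring,
      show n+1+(2*j+2) = n+2*j+2+1 from by ring,
      show n+(2*j+2) = n+2*j+2 from by ring,
      show n+1+2*j = n+2*j+1 from by ring]
    have hB := pasc2 (n+2*j+2) (2*j)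
    have hP : (((p+1).choose (j+1)) : ℤ) = p.choose j + p.choose (j+1) := by
      exact_mod_cast congrArg (Nat.cast : ℕ → ℤ) (Nat.choose_succ_succ p j)
    linear_combination
      ((-1:ℤ)^(p+j)) * (((n+2*j+2+2).choose (2*j+2) : ℤ)
          - 2*((n+2*j+2+1).choose (2*j+2) : ℤ) + ((n+2*j+2).choose (2*j+2) : ℤ)) * hP
        + ((-1:ℤ)^(p+j)) * (p.choose j : ℤ) * hB
  rw [Finset.sum_congr rfl termwise, Finset.sum_range_sub' g (p+1)]
  simp [hgdef, Nat.choose_succ_self]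

lemma alt1 (p : ℕ) :
    ∑ k ∈ range (p+1), (-1:ℤ)^(p-k) * (p.choose k : ℤ) = if p = 0 then 1 else 0 := by
  have h : ∀ k ∈ range (p+1), (-1:ℤ)^(p-k) * (p.choose k : ℤ)
      = (-1)^p * ((-1)^k * (p.choose k : ℤ)) := by
    intro k hk; rw [mem_range] at hk
    rw [neg_one_pow_sub' p k (by omega), pow_add]; ring
  rw [Finset.sum_congr rfl h, ← Finset.mul_sum, Int.alternating_sum_range_choose]
  by_cases hp : p = 0 <;> simp [hp]

lemma alt2 (p : ℕ) :
    ∑ k ∈ range (p+1), (-1:ℤ)^(p-k) * (p.choose k : ℤ) * (k : ℤ)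
      = if p = 1 then 1 else 0 := by
  cases p with
  | zero => simp
  | succ q =>
    rw [Finset.sum_range_succ']
    simp only [Nat.succ_sub_succ, Nat.cast_zero, mul_zero, add_zero, Nat.cast_add, Nat.cast_one]
    have h : ∀ j ∈ range (q+1),
        (-1:ℤ)^(q-j) * (((q+1).choose (j+1) : ℤ)) * ((j : ℤ) + 1)
          = ((q:ℤ)+1) * ((-1)^(q-j) * (q.choose j : ℤ)) := by
      intro j hj
      have h2 : ((q+1 : ℕ) : ℤ) * (q.choose j : ℤ) = ((q+1).choose (j+1) : ℤ) * ((j:ℤ)+1) := by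
        exact_mod_cast Nat.add_one_mul_choose_eq q j
      push_cast at h2
      linear_combination (-(-1:ℤ)^(q-j)) * h2
    rw [Finset.sum_congr rfl h, ← Finset.mul_sum, alt1 q]
    by_cases hq : q = 0 <;> simp [hq]

lemma OCPS'_zero (m : ℕ) : OCPS' m 0 = 1 := by simp [OCPS']

lemma OCPS'_n0 (p : ℕ) : OCPS' 0 p = if p = 0 then 1 else 0 := by
  rw [OCPS', ← alt1]
  refine Finset.sum_congr rfl fun k hk => ?_
  simp

lemma OCPS'_n1 (p : ℕ) : OCPS' 1 p = if p = 0 then 1 else if p = 1 then 2 else 0 := by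
  have e : ∀ k : ℕ, ((1 + 2*k).choose (2*k) : ℤ) = 2*(k:ℤ) + 1 := by
    intro k
    rw [show 1 + 2*k = 2*k + 1 from by ring, Nat.choose_succ_self_right]
    push_cast; ring
  have h : OCPS' 1 p = ∑ k ∈ range (p+1),
      ((-1:ℤ)^(p-k) * (p.choose k : ℤ) + 2 * ((-1:ℤ)^(p-k) * (p.choose k : ℤ) * (k:ℤ))) := by
    rw [OCPS']
    refine Finset.sum_congr rfl fun k hk => ?_
    rw [e k]; ring
  rw [h, Finset.sum_add_distrib, ← Finset.mul_sum, alt1, alt2]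
  rcases p with _ | _ | p <;> simp

theorem coeff_G_eq_OCPS (G : PowerSeries (Polynomial ℚ))
    (hG : G * (1 - 2 * PowerSeries.X * PowerSeries.C (1 + Polynomial.X)
        + PowerSeries.X ^ 2 * PowerSeries.C (1 + Polynomial.X))
      = 1 - PowerSeries.X) :
    ∀ n p : ℕ,
      ((PowerSeries.coeff n G).coeff p) = (OCPS' n p : ℚ) := by
  set a : Polynomial ℚ := 1 + Polynomial.X with ha
  have h2b : (PowerSeries.C (R := Polynomial ℚ)) 2 = 2 := by
    exact map_ofNat _ 2
  have hG' : G = 1 - PowerSeries.X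
      + PowerSeries.X * (PowerSeries.C 2 * (PowerSeries.C a * G))
      - PowerSeries.X * (PowerSeries.X * (PowerSeries.C a * G)) := by
    linear_combination hG - PowerSeries.X * (PowerSeries.C a * G) * h2b
  have h0 : PowerSeries.coeff 0 G = 1 := by
    rw [hG']; simp
  have h0c : PowerSeries.constantCoeff G = 1 := by
    rw [← PowerSeries.coeff_zero_eq_constantCoeff]; exact h0
  have h1 : PowerSeries.coeff 1 G = 1 + 2 * Polynomial.X := by
    rw [hG']
    simp [PowerSeries.coeff_one, PowerSeries.coeff_X, coeff_succ_X_mul,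
      PowerSeries.coeff_C_mul, h0c, ha]
    ring
  have hrec : ∀ m : ℕ, PowerSeries.coeff (m+2) G
      = 2 * (a * PowerSeries.coeff (m+1) G)
        - a * PowerSeries.coeff m G := by
    intro m
    conv_lhs => rw [hG']
    simp [PowerSeries.coeff_one, PowerSeries.coeff_X, coeff_succ_X_mul,
      PowerSeries.coeff_C_mul]
  intro n
  induction n using Nat.twoStepInduction with
  | zero =>
    intro p
    rw [h0, OCPS'_n0]
    rcases p with _ | p <;> simp [Polynomial.coeff_one]
  | one =>
    intro p
    rw [h1, OCPS'_n1]
    rcases p with _ | _ | p <;> simp [Polynomial.coeff_one, Polynomial.coeff_X]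
  | more n ihn ihn1 =>
    intro p
    rw [hrec n]
    rcases p with _ | p
    · have e0 : ∀ q : Polynomial ℚ, (a * q).coeff 0 = q.coeff 0 := by
        intro q; rw [ha]; simp [Polynomial.mul_coeff_zero]
      simp only [Polynomial.coeff_sub, Polynomial.coeff_ofNat_mul, e0]
      rw [ihn1 0, ihn 0]
      simp [OCPS'_zero]
      norm_num
    · have e1 : ∀ q : Polynomial ℚ, (a * q).coeff (p+1) = q.coeff (p+1) + q.coeff p := by
        intro q; rw [ha, add_mul, one_mul]
        simp [Polynomial.coeff_X_mul]
      simp only [Polynomial.coeff_sub, Polynomial.coeff_ofNat_mul, e1]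
      rw [ihn1 (p+1), ihn1 p, ihn (p+1), ihn p]
      have hc := OCPS'_rec n p
      have hcq : ((OCPS' (n+2) (p+1) : ℤ) : ℚ) - 2 * ((OCPS' (n+1) (p+1) : ℤ) : ℚ)
          + ((OCPS' n (p+1) : ℤ) : ℚ) - 2 * ((OCPS' (n+1) p : ℤ) : ℚ)
          + ((OCPS' n p : ℤ) : ℚ) = 0 := by exact_mod_cast hc
      linarith [hcq]
end

section
/- For every positive integer n, the sequence p ↦ OCPS(n, p) for p = 1, …, n is logarithmically concave: OCPS(n, p)² ≥ OCPS(n, p−1) · OCPS(n, p+1) for all 2 ≤ p ≤ n−1. -/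
open Finset

open Finset

lemma alt_sum (m : ℕ) : ∀ a b : ℕ,
    ∑ k ∈ Finset.range (m+1), (-1:ℤ)^k * (m.choose k : ℤ) * ((a+k).choose (b+m) : ℤ)
      = (-1:ℤ)^m * (a.choose b : ℤ) := by
  induction m with
  | zero => intro a b; simp
  | succ m ih =>
    intro a b
    rw [Finset.sum_range_succ' _ (m+1)]
    have e1 : ∀ k ∈ Finset.range (m+1),
        (-1:ℤ)^(k+1) * ((m+1).choose (k+1) : ℤ) * ((a+(k+1)).choose (b+(m+1)) : ℤ)
        = -((-1:ℤ)^k * (m.choose k : ℤ) * (((a+1)+k).choose ((b+1)+m) : ℤ))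
          + (-1:ℤ)^(k+1) * (m.choose (k+1) : ℤ) * (((a+1)+k).choose ((b+1)+m) : ℤ) := by
      intro k hk
      rw [Nat.choose_succ_succ m k]
      push_cast
      have : a + (k+1) = a + 1 + k := by omega
      rw [this]
      have : b + (m+1) = b + 1 + m := by omega
      rw [this]
      ring
    rw [Finset.sum_congr rfl e1, Finset.sum_add_distrib]
    have h1 : ∑ k ∈ Finset.range (m+1),
        -((-1:ℤ)^k * (m.choose k : ℤ) * (((a+1)+k).choose ((b+1)+m) : ℤ))
        = -((-1:ℤ)^m * ((a+1).choose (b+1) : ℤ)) := by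
      simp only [Finset.sum_neg_distrib, ih (a+1) (b+1)]
    -- second piece: relate to ih a (b+1) with k=0 peeled
    have h2 : ∑ k ∈ Finset.range (m+1),
        (-1:ℤ)^(k+1) * (m.choose (k+1) : ℤ) * (((a+1)+k).choose ((b+1)+m) : ℤ)
        = (-1:ℤ)^m * (a.choose (b+1) : ℤ) - (a.choose ((b+1)+m) : ℤ) := by
      have := ih a (b+1)
      rw [Finset.sum_range_succ' _ m] at this
      simp only [pow_zero, Nat.choose_zero_right, Nat.cast_one, one_mul, mul_one, Nat.add_zero] at this
      -- this : ∑ k ∈ range m, (-1)^(k+1) * C(m,k+1) * C(a+(k+1), b+1+m) + C(a, b+1+m) = (-1)^m * C(a,b+1)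
      rw [Finset.sum_range_succ]
      simp only [Nat.choose_succ_self, Nat.cast_zero, mul_zero, zero_mul, add_zero]
      have e2 : ∀ k ∈ Finset.range m,
          (-1:ℤ)^(k+1) * (m.choose (k+1) : ℤ) * (((a+1)+k).choose ((b+1)+m) : ℤ)
          = (-1:ℤ)^(k+1) * (m.choose (k+1) : ℤ) * ((a+(k+1)).choose ((b+1)+m) : ℤ) := by
        intro k hk
        rw [show a + 1 + k = a + (k+1) by omega]
      rw [Finset.sum_congr rfl e2]
      linarith [this]
    rw [h1, h2]
    simp only [pow_zero, Nat.choose_zero_right, Nat.cast_one, one_mul, mul_one]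
    have pascal : ((a+1).choose (b+1) : ℤ) = (a.choose b : ℤ) + (a.choose (b+1) : ℤ) := by
      rw [Nat.choose_succ_succ]; push_cast; ring
    have : b + (m+1) = (b+1) + m := by omega
    rw [this, pascal]
    ring

noncomputable section
abbrev PS := PowerSeries ℤ

def Aser (ν : ℕ) : PS := PowerSeries.mk fun k => ((ν + 2*k).choose (2*k) : ℤ)
def Bser (ν : ℕ) : PS := PowerSeries.mk fun k => ((ν + 1 + 2*k).choose (2*k+1) : ℤ)
def Gser (ν : ℕ) : PS := PowerSeries.mk fun j => ((ν+1).choose (2*j) : ℤ)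
def Hser (ν : ℕ) : PS := PowerSeries.mk fun j => ((ν+1).choose (2*j+1) : ℤ)
def Eser (ν : ℕ) : PS := PowerSeries.mk fun i => ((ν + i).choose ν : ℤ)

lemma Arec (ν : ℕ) : Aser (ν+1) = Aser ν + PowerSeries.X * Bser (ν+1) := by
  ext k
  rcases k with _ | k
  · simp [Aser, Bser, PowerSeries.coeff_zero_X_mul]
  · simp only [Aser, Bser, map_add, PowerSeries.coeff_mk, PowerSeries.coeff_succ_X_mul]
    have hnat : (ν+1 + 2*(k+1)).choose (2*(k+1))
        = (ν + 2*(k+1)).choose (2*(k+1)) + (ν+1+1+2*k).choose (2*k+1) := by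
      have h := Nat.choose_succ_succ (ν+2*k+2) (2*k+1)
      simp only [Nat.succ_eq_add_one] at h
      rw [show (ν+2*k+2)+1 = ν+1+2*(k+1) by omega, show (2*k+1)+1 = 2*(k+1) by omega] at h
      rw [h, show ν+2*(k+1) = ν+2*k+2 by omega, show ν+1+1+2*k = ν+2*k+2 by omega]
      exact Nat.add_comm _ _
    exact_mod_cast congrArg (Nat.cast : ℕ → ℤ) hnat

lemma Brec (ν : ℕ) : Bser (ν+1) = Bser ν + Aser (ν+1) := by
  ext k
  simp only [Bser, Aser, map_add, PowerSeries.coeff_mk]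
  have hnat : (ν+1+1+2*k).choose (2*k+1) = (ν+1+2*k).choose (2*k+1) + (ν+1+2*k).choose (2*k) := by
    rw [show ν+1+1+2*k = (ν+1+2*k)+1 by omega, show 2*k+1 = (2*k)+1 by omega,
        Nat.choose_succ_succ]
    exact Nat.add_comm _ _
  exact_mod_cast congrArg (Nat.cast : ℕ → ℤ) hnat

lemma Grec (ν : ℕ) : Gser (ν+1) = Gser ν + PowerSeries.X * Hser ν := by
  ext j
  rcases j with _ | j
  · simp [Gser, Hser]
  · simp only [Gser, Hser, map_add, PowerSeries.coeff_mk, PowerSeries.coeff_succ_X_mul]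
    have hnat : (ν+1+1).choose (2*(j+1)) = (ν+1).choose (2*(j+1)) + (ν+1).choose (2*j+1) := by
      rw [show ν+1+1 = (ν+1)+1 by rfl, show 2*(j+1) = (2*j+1)+1 by omega,
          Nat.choose_succ_succ, show (2*j+1)+1 = 2*(j+1) by omega]
      exact Nat.add_comm _ _
    exact_mod_cast congrArg (Nat.cast : ℕ → ℤ) hnat

lemma Hrec (ν : ℕ) : Hser (ν+1) = Hser ν + Gser ν := by
  ext j
  simp only [Hser, Gser, map_add, PowerSeries.coeff_mk]
  have hnat : (ν+1+1).choose (2*j+1) = (ν+1).choose (2*j+1) + (ν+1).choose (2*j) := by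
    rw [show ν+1+1 = (ν+1)+1 by rfl, show 2*j+1 = (2*j)+1 by rfl, Nat.choose_succ_succ]
    exact Nat.add_comm _ _
  exact_mod_cast congrArg (Nat.cast : ℕ → ℤ) hnat

lemma Erec (ν : ℕ) : (1 - PowerSeries.X) * Eser (ν+1) = Eser ν := by
  ext k
  rw [sub_mul, one_mul, map_sub]
  rcases k with _ | k
  · simp [Eser, PowerSeries.coeff_zero_X_mul]
  · simp only [Eser, PowerSeries.coeff_mk, PowerSeries.coeff_succ_X_mul]
    have hnat : (ν+1+(k+1)).choose (ν+1) = (ν+(k+1)).choose ν + (ν+1+k).choose (ν+1) := by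
      have h := Nat.choose_succ_succ (ν+1+k) ν
      simp only [Nat.succ_eq_add_one] at h
      rw [show (ν+1+k)+1 = ν+1+(k+1) by omega] at h
      rw [h, show ν+(k+1) = ν+1+k by omega]
      try exact Nat.add_comm _ _
    push_cast [hnat]
    try ring
lemma Ebase : (1 - PowerSeries.X) * Eser 0 = 1 := by
  ext k
  rw [sub_mul, one_mul, map_sub]
  rcases k with _ | k
  · simp [Eser, PowerSeries.coeff_zero_X_mul]
  · simp [Eser, PowerSeries.coeff_succ_X_mul, PowerSeries.coeff_one]

lemma Epow (ν : ℕ) : (1 - PowerSeries.X)^(ν+1) * Eser ν = 1 := by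
  induction ν with
  | zero => simpa using Ebase
  | succ ν ih =>
    calc (1 - PowerSeries.X)^(ν+2) * Eser (ν+1)
        = (1 - PowerSeries.X)^(ν+1) * ((1-PowerSeries.X) * Eser (ν+1)) := by ring
      _ = 1 := by rw [Erec, ih]

lemma ABbase : (1 - PowerSeries.X) * Aser 0 = Gser 0 ∧ (1 - PowerSeries.X) * Bser 0 = Hser 0 := by
  constructor <;> ext k <;> rw [sub_mul, one_mul, map_sub] <;> rcases k with _ | k
  · simp [Aser, Gser, PowerSeries.coeff_zero_X_mul]
  · simp only [Aser, Gser, PowerSeries.coeff_mk, PowerSeries.coeff_succ_X_mul]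
    rw [show (0+2*(k+1):ℕ) = 2*(k+1) by omega, show (0+2*k:ℕ) = 2*k by omega,
        Nat.choose_self, Nat.choose_self, show (0+1:ℕ) = 1 by rfl,
        Nat.choose_eq_zero_of_lt (by omega : (1:ℕ) < 2*(k+1))]
    simp
  · simp only [Bser, Hser, PowerSeries.coeff_mk, PowerSeries.coeff_zero_X_mul]
    norm_num
  · simp only [Bser, Hser, PowerSeries.coeff_mk, PowerSeries.coeff_succ_X_mul]
    rw [show (0+1+2*(k+1):ℕ) = 2*(k+1)+1 by omega, Nat.choose_self,
        show (0+1+2*k:ℕ) = 2*k+1 by omega, Nat.choose_self,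
        Nat.choose_eq_zero_of_lt (by omega : (0+1:ℕ) < 2*(k+1)+1)]
    simp

lemma ABpow (ν : ℕ) : (1 - PowerSeries.X)^(ν+1) * Aser ν = Gser ν ∧
    (1 - PowerSeries.X)^(ν+1) * Bser ν = Hser ν := by
  induction ν with
  | zero => simpa using ABbase
  | succ ν ih =>
    obtain ⟨ihA, ihB⟩ := ih
    have hX : (1 - PowerSeries.X : PS) ≠ 0 := by
      intro h
      have := congrArg (PowerSeries.coeff 0) h
      simp at this
    have e1 : (1-PowerSeries.X)^(ν+2) * Aser (ν+1)
        = (1-PowerSeries.X) * Gser ν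
          + PowerSeries.X * ((1-PowerSeries.X)^(ν+2) * Bser (ν+1)) := by
      rw [Arec ν, mul_add]
      congr 1
      · calc (1-PowerSeries.X)^(ν+2) * Aser ν
            = (1-PowerSeries.X) * ((1-PowerSeries.X)^(ν+1) * Aser ν) := by ring
          _ = (1-PowerSeries.X) * Gser ν := by rw [ihA]
      · ring
    have e2 : (1-PowerSeries.X)^(ν+2) * Bser (ν+1)
        = (1-PowerSeries.X) * Hser ν + (1-PowerSeries.X)^(ν+2) * Aser (ν+1) := by
      rw [Brec ν, mul_add]
      congr 1
      calc (1-PowerSeries.X)^(ν+2) * Bser ν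
          = (1-PowerSeries.X) * ((1-PowerSeries.X)^(ν+1) * Bser ν) := by ring
        _ = (1-PowerSeries.X) * Hser ν := by rw [ihB]
    have cancel : (1-PowerSeries.X) * ((1-PowerSeries.X)^(ν+2) * Aser (ν+1))
        = (1-PowerSeries.X) * (Gser ν + PowerSeries.X * Hser ν) := by
      linear_combination e1 + PowerSeries.X * e2
    have hA2 := mul_left_cancel₀ hX cancel
    have hA3 : (1-PowerSeries.X)^(ν+2) * Aser (ν+1) = Gser (ν+1) := by
      rw [hA2, Grec]
    refine ⟨hA3, ?_⟩
    have hB2 : (1-PowerSeries.X)^(ν+2) * Bser (ν+1) = Hser ν + Gser ν := by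
      linear_combination e2 + hA2
    rw [hB2, Hrec]

lemma AGE (ν : ℕ) : Aser ν = Gser ν * Eser ν := by
  calc Aser ν = ((1 - PowerSeries.X)^(ν+1) * Eser ν) * Aser ν := by rw [Epow]; ring
    _ = ((1 - PowerSeries.X)^(ν+1) * Aser ν) * Eser ν := by ring
    _ = Gser ν * Eser ν := by rw [(ABpow ν).1]

-- C1 : coefficient identity
lemma C1 (ν k : ℕ) : ((ν + 2*k).choose (2*k) : ℤ)
    = ∑ j ∈ Finset.range (k+1), ((ν+1).choose (2*j) : ℤ) * ((ν + (k-j)).choose ν : ℤ) := by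
  have := congrArg (PowerSeries.coeff k) (AGE ν)
  rw [PowerSeries.coeff_mul] at this
  simp only [Aser, Gser, Eser, PowerSeries.coeff_mk] at this
  rw [this, Finset.Nat.sum_antidiagonal_eq_sum_range_succ_mk]

noncomputable section

-- even/odd split of a sum
lemma sum_even_odd (f : ℕ → ℂ) : ∀ N : ℕ, ∑ k ∈ range N, f k
    = ∑ j ∈ range ((N+1)/2), f (2*j) + ∑ j ∈ range (N/2), f (2*j+1) := by
  intro N
  induction N with
  | zero => simp
  | succ N ih =>
    rw [Finset.sum_range_succ, ih]
    rcases Nat.even_or_odd N with ⟨t, ht⟩ | ⟨t, ht⟩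
    · subst ht
      rw [show (t+t+1+1)/2 = t+1 by omega, show (t+t+1)/2 = t by omega,
          show (t+t)/2 = t by omega]
      rw [Finset.sum_range_succ (fun j => f (2*j)) t, show 2*t = t+t by omega]
      ring
    · subst ht
      rw [show (2*t+1+1+1)/2 = t+1 by omega, show (2*t+1+1)/2 = t+1 by omega,
          show (2*t+1)/2 = t by omega]
      rw [Finset.sum_range_succ (fun j => f (2*j+1)) t]
      ring

lemma binom_even (n : ℕ) (z : ℂ) :
    (1+z)^n + (1-z)^n = 2 * ∑ j ∈ range (n/2+1), ((n.choose (2*j) : ℂ)) * z^(2*j) := by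
  have h1 : (1+z)^n = ∑ k ∈ range (n+1), z^k * (n.choose k : ℂ) := by
    rw [add_comm]
    simpa using add_pow z 1 n
  have h2 : (1-z)^n = ∑ k ∈ range (n+1), (-z)^k * (n.choose k : ℂ) := by
    rw [sub_eq_add_neg, add_comm]
    simpa using add_pow (-z) 1 n
  rw [h1, h2, ← Finset.sum_add_distrib]
  have key : ∀ k, z^k * (n.choose k : ℂ) + (-z)^k * (n.choose k : ℂ)
      = (1 + (-1)^k) * z^k * (n.choose k : ℂ) := by
    intro k; rw [neg_pow]; ring
  rw [Finset.sum_congr rfl (fun k _ => key k)]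
  rw [sum_even_odd (fun k => (1 + (-1:ℂ)^k) * z^k * (n.choose k : ℂ)) (n+1)]
  have hodd : ∑ j ∈ range ((n+1)/2), (1 + (-1:ℂ)^(2*j+1)) * z^(2*j+1) * (n.choose (2*j+1) : ℂ) = 0 := by
    apply Finset.sum_eq_zero
    intro j _
    simp [pow_succ, pow_mul]
  have heven : ∀ j, (1 + (-1:ℂ)^(2*j)) * z^(2*j) * (n.choose (2*j) : ℂ)
      = 2 * ((n.choose (2*j):ℂ) * z^(2*j)) := by
    intro j; rw [pow_mul]; norm_num; ring
  rw [show (n+1+1)/2 = n/2+1 by omega, hodd, add_zero,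
      Finset.sum_congr rfl (fun j _ => heven j), ← Finset.mul_sum]

-- trig evaluation of the even binomial sum
lemma trig_eval (n : ℕ) (θ : ℝ) (hc : Real.cos θ ≠ 0) :
    ∑ j ∈ range (n/2+1), ((n.choose (2*j) : ℝ)) * (-(Real.tan θ^2))^j
      = Real.cos (n*θ) / (Real.cos θ)^n := by
  have key : ((1:ℂ) + Real.tan θ * Complex.I)^n + (1 - Real.tan θ * Complex.I)^n
      = 2 * (Real.cos (n*θ) / (Real.cos θ)^n : ℝ) := by
    have hcC : (Real.cos θ : ℂ) ≠ 0 := by exact_mod_cast hc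
    have hcC' : Complex.cos (θ:ℂ) ≠ 0 := by rw [← Complex.ofReal_cos]; exact hcC
    have e1 : (1:ℂ) + Real.tan θ * Complex.I
        = (Complex.cos θ + Complex.sin θ * Complex.I) / Complex.cos θ := by
      rw [Real.tan_eq_sin_div_cos]
      push_cast
      field_simp
    have e2 : (1:ℂ) - Real.tan θ * Complex.I
        = (Complex.cos (-(θ:ℂ)) + Complex.sin (-(θ:ℂ)) * Complex.I) / Complex.cos θ := by
      rw [Real.tan_eq_sin_div_cos]
      push_cast
      rw [Complex.cos_neg, Complex.sin_neg]
      field_simp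
      ring
    rw [e1, e2, div_pow, div_pow, Complex.cos_add_sin_mul_I_pow, Complex.cos_add_sin_mul_I_pow]
    rw [← add_div]
    rw [show ((n:ℂ) * -(θ:ℂ)) = -((n:ℂ)*(θ:ℂ)) by ring, Complex.cos_neg, Complex.sin_neg]
    rw [show Complex.cos ((n:ℂ)*(θ:ℂ)) + Complex.sin ((n:ℂ)*(θ:ℂ))*Complex.I
        + (Complex.cos ((n:ℂ)*(θ:ℂ)) + -Complex.sin ((n:ℂ)*(θ:ℂ))*Complex.I)
        = 2 * Complex.cos ((n:ℂ)*(θ:ℂ)) by ring]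
    rw [show ((n:ℂ)*(θ:ℂ)) = ((n*θ:ℝ):ℂ) by push_cast; ring, ← Complex.ofReal_cos]
    rw [show Complex.cos (θ:ℂ) = ((Real.cos θ : ℝ):ℂ) from (Complex.ofReal_cos θ).symm]
    push_cast
    field_simp
  have lhsC : ((1:ℂ) + Real.tan θ * Complex.I)^n + (1 - Real.tan θ * Complex.I)^n
      = 2 * ∑ j ∈ range (n/2+1), ((n.choose (2*j) : ℂ)) * (-((Real.tan θ:ℂ)^2))^j := by
    have := binom_even n (Real.tan θ * Complex.I)
    rw [this]
    congr 1
    apply Finset.sum_congr rfl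
    intro j _
    rw [pow_mul]
    congr 2
    rw [mul_pow, Complex.I_sq]
    ring
  rw [lhsC] at key
  have h2 : (2:ℂ) ≠ 0 := by norm_num
  have := mul_left_cancel₀ h2 key
  have cast_eq : ((∑ j ∈ range (n/2+1), ((n.choose (2*j) : ℝ)) * (-(Real.tan θ^2))^j : ℝ) : ℂ)
      = ∑ j ∈ range (n/2+1), ((n.choose (2*j) : ℂ)) * (-((Real.tan θ:ℂ)^2))^j := by
    push_cast
    rfl
  exact_mod_cast cast_eq.trans this

variable (n : ℕ)

def mval : ℕ := n / 2
def θv (k : ℕ) : ℝ := (2*k+1) * Real.pi / (2*n)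
def rv (k : ℕ) : ℝ := Real.tan (θv n k) ^ 2

def Gpoly : Polynomial ℝ := ∑ j ∈ range (mval n + 1), Polynomial.C ((n.choose (2*j) : ℝ)) * Polynomial.X ^ j
def Ppoly : Polynomial ℝ :=
  Polynomial.C ((n.choose (2 * mval n) : ℝ)) * ∏ k ∈ range (mval n), (Polynomial.X + Polynomial.C (rv n k))

lemma θv_mem (hn : 1 ≤ n) {k : ℕ} (hk : k < mval n) : 0 < θv n k ∧ θv n k < Real.pi / 2 := by
  have hπ := Real.pi_pos
  have hn' : (0:ℝ) < n := by exact_mod_cast hn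
  unfold θv
  constructor
  · positivity
  · rw [div_lt_div_iff₀ (by positivity) (by norm_num : (0:ℝ) < 2)]
    have h2 : (2*k+1 : ℝ) < n := by
      have : 2*k+1 < n := by
        have hh : k < n / 2 := hk
        omega
      exact_mod_cast this
    nlinarith

lemma cos_θv_pos (hn : 1 ≤ n) {k : ℕ} (hk : k < mval n) : 0 < Real.cos (θv n k) := by
  obtain ⟨h1, h2⟩ := θv_mem n hn hk
  apply Real.cos_pos_of_mem_Ioo
  constructor
  · linarith [Real.pi_pos]
  · exact h2

lemma tan_θv_pos (hn : 1 ≤ n) {k : ℕ} (hk : k < mval n) : 0 < Real.tan (θv n k) := by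
  obtain ⟨h1, h2⟩ := θv_mem n hn hk
  exact Real.tan_pos_of_pos_of_lt_pi_div_two h1 h2

lemma cos_n_θv (hn : 1 ≤ n) (k : ℕ) : Real.cos (n * θv n k) = 0 := by
  have hn' : (n:ℝ) ≠ 0 := by
    have : (0:ℝ) < n := by exact_mod_cast hn
    linarith
  have : (n:ℝ) * θv n k = k * Real.pi + Real.pi / 2 := by
    unfold θv
    field_simp
  rw [this, Real.cos_add, Real.cos_pi_div_two, Real.sin_pi_div_two, Real.sin_nat_mul_pi]
  ring

lemma Gpoly_eval_root (hn : 1 ≤ n) {k : ℕ} (hk : k < mval n) :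
    (Gpoly n).eval (-(rv n k)) = 0 := by
  have hc : Real.cos (θv n k) ≠ 0 := ne_of_gt (cos_θv_pos n hn hk)
  have := trig_eval n (θv n k) hc
  rw [cos_n_θv n hn k] at this
  unfold Gpoly rv
  rw [Polynomial.eval_finset_sum]
  simp only [Polynomial.eval_mul, Polynomial.eval_C, Polynomial.eval_pow, Polynomial.eval_X]
  rw [show mval n = n / 2 from rfl] at *
  rw [this]
  simp

lemma Gpoly_coeff_top : (Gpoly n).coeff (mval n) = (n.choose (2 * mval n) : ℝ) := by
  unfold Gpoly
  rw [Polynomial.finset_sum_coeff]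
  rw [Finset.sum_eq_single (mval n)]
  · simp [Polynomial.coeff_C_mul, Polynomial.coeff_X_pow]
  · intro j _ hj
    simp [Polynomial.coeff_C_mul, Polynomial.coeff_X_pow, hj, Ne.symm hj]
  · intro h
    exact absurd (Finset.self_mem_range_succ (mval n)) h

lemma Gpoly_natDegree_le : (Gpoly n).natDegree ≤ mval n := by
  unfold Gpoly
  apply Polynomial.natDegree_sum_le_of_forall_le
  intro j hj
  refine le_trans (Polynomial.natDegree_C_mul_le _ _) ?_
  rw [Polynomial.natDegree_X_pow]
  exact Nat.lt_succ_iff.mp (Finset.mem_range.mp hj)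

lemma choose_top_pos (hn : 1 ≤ n) : 0 < n.choose (2 * mval n) := by
  apply Nat.choose_pos
  have : mval n = n / 2 := rfl
  omega

lemma prod_monic : ((∏ k ∈ range (mval n), (Polynomial.X + Polynomial.C (rv n k))) : Polynomial ℝ).Monic := by
  apply Polynomial.monic_prod_of_monic
  intro k _
  exact Polynomial.monic_X_add_C _

lemma prod_natDegree : ((∏ k ∈ range (mval n), (Polynomial.X + Polynomial.C (rv n k))) : Polynomial ℝ).natDegree = mval n := by
  rw [Polynomial.natDegree_prod]
  · simp [Polynomial.natDegree_X_add_C]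
  · intro k _
    exact (Polynomial.monic_X_add_C _).ne_zero

lemma Ppoly_coeff_top : (Ppoly n).coeff (mval n) = (n.choose (2 * mval n) : ℝ) := by
  unfold Ppoly
  rw [Polynomial.coeff_C_mul]
  have h1 := prod_monic n
  have h2 := prod_natDegree n
  have h3 := h1.coeff_natDegree
  rw [h2] at h3
  rw [h3, mul_one]

lemma Ppoly_natDegree (hn : 1 ≤ n) : (Ppoly n).natDegree = mval n := by
  unfold Ppoly
  rw [Polynomial.natDegree_C_mul, prod_natDegree]
  have := choose_top_pos n hn
  exact_mod_cast Nat.cast_ne_zero.mpr (by omega)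

lemma Ppoly_eval_root {k : ℕ} (hk : k < mval n) : (Ppoly n).eval (-(rv n k)) = 0 := by
  unfold Ppoly
  rw [Polynomial.eval_mul, Polynomial.eval_prod]
  apply mul_eq_zero_of_right
  apply Finset.prod_eq_zero (Finset.mem_range.mpr hk)
  simp

lemma rv_strictmono (hn : 1 ≤ n) {a b : ℕ} (hb : b < mval n) (h : a < b) : rv n a < rv n b := by
  have mono : θv n a < θv n b := by
    unfold θv
    rw [div_lt_div_iff₀ (by positivity) (by positivity)]
    have hπ := Real.pi_pos
    have h1 : (2*a+1:ℝ) < 2*b+1 := by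
      have : 2*a+1 < 2*b+1 := by omega
      exact_mod_cast this
    have hn' : (0:ℝ) < n := by exact_mod_cast hn
    have := mul_lt_mul_of_pos_right (mul_lt_mul_of_pos_right h1 hπ) (by positivity : (0:ℝ) < 2*n)
    linarith
  have ha' : a < mval n := lt_trans h hb
  have h0a := (θv_mem n hn ha').1
  have h2b := (θv_mem n hn hb).2
  have htan : Real.tan (θv n a) < Real.tan (θv n b) :=
    Real.tan_lt_tan_of_nonneg_of_lt_pi_div_two (le_of_lt h0a) h2b mono
  have hta := tan_θv_pos n hn ha'
  unfold rv
  nlinarith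

lemma rv_injOn (hn : 1 ≤ n) : Set.InjOn (fun k => -(rv n k)) (range (mval n) : Finset ℕ) := by
  intro a ha b hb hab
  simp only [Finset.coe_range, Set.mem_Iio] at ha hb
  simp only [neg_inj] at hab
  by_contra hne
  rcases Nat.lt_or_ge a b with h | h
  · exact absurd hab (ne_of_lt (rv_strictmono n hn hb h))
  · have : b < a := by omega
    exact absurd hab.symm (ne_of_lt (rv_strictmono n hn ha this))

lemma Gpoly_eq_Ppoly (hn : 1 ≤ n) : Gpoly n = Ppoly n := by
  by_contra hne
  set D := Gpoly n - Ppoly n with hD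
  have hD0 : D ≠ 0 := sub_ne_zero.mpr hne
  have hdeg : D.natDegree ≤ mval n := by
    refine le_trans (Polynomial.natDegree_sub_le _ _) ?_
    rw [max_le_iff]
    exact ⟨Gpoly_natDegree_le n, le_of_eq (Ppoly_natDegree n hn)⟩
  have hcoeff : D.coeff (mval n) = 0 := by
    rw [hD, Polynomial.coeff_sub, Gpoly_coeff_top, Ppoly_coeff_top, sub_self]
  have hlt : D.natDegree < mval n := by
    rcases lt_or_eq_of_le hdeg with h | h
    · exact h
    · exfalso
      apply hD0
      apply Polynomial.leadingCoeff_eq_zero.mp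
      rw [Polynomial.leadingCoeff, h, hcoeff]
  set S := (range (mval n)).image (fun k => -(rv n k)) with hS
  have hcard : S.card = mval n := by
    rw [hS, Finset.card_image_of_injOn (rv_injOn n hn), Finset.card_range]
  have hroots : S ⊆ D.roots.toFinset := by
    intro x hx
    rw [hS, Finset.mem_image] at hx
    obtain ⟨k, hk, rfl⟩ := hx
    rw [Multiset.mem_toFinset, Polynomial.mem_roots hD0]
    have : D.eval (-(rv n k)) = 0 := by
      rw [hD, Polynomial.eval_sub, Gpoly_eval_root n hn (Finset.mem_range.mp hk),
          Ppoly_eval_root n (Finset.mem_range.mp hk), sub_self]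
    exact this
  have : mval n ≤ D.natDegree := by
    calc mval n = S.card := hcard.symm
      _ ≤ D.roots.toFinset.card := Finset.card_le_card hroots
      _ ≤ Multiset.card D.roots := Multiset.toFinset_card_le _
      _ ≤ D.natDegree := Polynomial.card_roots' D
  omega

def HPoly : Polynomial ℝ := ∑ j ∈ range (mval n + 1),
  Polynomial.C ((n.choose (2*j) : ℝ)) * ((Polynomial.X + 1)^(n-1-j) * Polynomial.X^j)

def Qpoly : Polynomial ℝ := Polynomial.C ((n.choose (2 * mval n) : ℝ)) *
  ((Polynomial.X + 1)^(n-1-mval n) *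
    ∏ k ∈ range (mval n), (Polynomial.C (rv n k) + Polynomial.C (1 + rv n k) * Polynomial.X))

lemma mval_le (hn : 1 ≤ n) : mval n ≤ n - 1 := by
  have : mval n = n / 2 := rfl
  omega

lemma HQ_eval (hn : 1 ≤ n) (x : ℝ) (hx : x + 1 ≠ 0) :
    (HPoly n).eval x = (Qpoly n).eval x := by
  set y := x + 1 with hy
  set u := x / y with hu
  have hxy : u * y = x := div_mul_cancel₀ x hx
  have hm := mval_le n hn
  have hGP := congrArg (Polynomial.eval u) (Gpoly_eq_Ppoly n hn)
  rw [Gpoly, Ppoly, Polynomial.eval_finset_sum] at hGP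
  simp only [Polynomial.eval_mul, Polynomial.eval_C, Polynomial.eval_pow, Polynomial.eval_X,
    Polynomial.eval_prod, Polynomial.eval_add] at hGP
  -- LHS
  have lhs_eq : (HPoly n).eval x
      = y^(n-1) * ∑ j ∈ range (mval n + 1), (n.choose (2*j) : ℝ) * u^j := by
    rw [HPoly, Polynomial.eval_finset_sum, Finset.mul_sum]
    apply Finset.sum_congr rfl
    intro j hj
    have hjm : j ≤ mval n := Nat.lt_succ_iff.mp (Finset.mem_range.mp hj)
    simp only [Polynomial.eval_mul, Polynomial.eval_C, Polynomial.eval_pow, Polynomial.eval_X,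
      Polynomial.eval_add, Polynomial.eval_one]
    have hxj : x^j = u^j * y^j := by rw [← mul_pow, hxy]
    have hyj : y^(n-1-j) * y^j = y^(n-1) := by
      rw [← pow_add]
      congr 1
      omega
    calc (n.choose (2*j):ℝ) * ((x+1)^(n-1-j) * x^j)
        = (n.choose (2*j):ℝ) * (y^(n-1-j) * (u^j * y^j)) := by rw [← hy, hxj]
      _ = y^(n-1) * ((n.choose (2*j):ℝ) * u^j) := by rw [← hyj]; ring
  -- RHS
  have rhs_eq : (Qpoly n).eval x
      = y^(n-1) * ((n.choose (2 * mval n) : ℝ) * ∏ k ∈ range (mval n), (u + rv n k)) := by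
    rw [Qpoly]
    simp only [Polynomial.eval_mul, Polynomial.eval_C, Polynomial.eval_pow, Polynomial.eval_X,
      Polynomial.eval_prod, Polynomial.eval_add, Polynomial.eval_one]
    have hprod : ∏ k ∈ range (mval n), (rv n k + (1 + rv n k) * x)
        = y^(mval n) * ∏ k ∈ range (mval n), (u + rv n k) := by
      have hyc : y^(mval n) = ∏ _k ∈ range (mval n), y := by
        rw [Finset.prod_const, Finset.card_range]
      rw [hyc, ← Finset.prod_mul_distrib]
      apply Finset.prod_congr rfl
      intro k _
      have : y * (u + rv n k) = y * u + rv n k * y := by ring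
      rw [this, mul_comm y u, hxy, hy]
      ring
    rw [hprod]
    have hysplit : y^(n-1) = y^(n-1-mval n) * y^(mval n) := by
      rw [← pow_add]
      congr 1
      omega
    rw [hysplit, ← hy]
    ring
  rw [lhs_eq, rhs_eq, hGP]

lemma HPoly_eq_Qpoly (hn : 1 ≤ n) : HPoly n = Qpoly n := by
  apply Polynomial.eq_of_infinite_eval_eq
  apply Set.Infinite.mono (s := ({-1}ᶜ : Set ℝ))
  · intro x hx
    simp only [Set.mem_compl_iff, Set.mem_singleton_iff] at hx
    have : x + 1 ≠ 0 := fun h => hx (by linarith)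
    exact HQ_eval n hn x this
  · exact Set.Finite.infinite_compl (Set.finite_singleton (-1))

lemma HPoly_coeff (i : ℕ) : (HPoly n).coeff i
    = ∑ j ∈ range (mval n + 1), (n.choose (2*j) : ℝ)
        * (if j ≤ i then (((n-1-j).choose (i-j) : ℝ)) else 0) := by
  rw [HPoly, Polynomial.finset_sum_coeff]
  apply Finset.sum_congr rfl
  intro j _
  rw [Polynomial.coeff_C_mul, Polynomial.coeff_mul_X_pow']
  congr 1
  split_ifs with h
  · rw [Polynomial.coeff_X_add_one_pow]
  · rfl

def PosLC (P : Polynomial ℝ) : Prop :=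
  (∀ i, 0 ≤ P.coeff i) ∧
  ∀ p q : ℕ, p ≤ q → P.coeff p * P.coeff (q+1) ≤ P.coeff (p+1) * P.coeff q

lemma posLC_C {c : ℝ} (hc : 0 ≤ c) : PosLC (Polynomial.C c) := by
  have hnn : ∀ i, 0 ≤ (Polynomial.C c).coeff i := by
    intro i
    rw [Polynomial.coeff_C]
    split_ifs <;> simp [hc]
  constructor
  · exact hnn
  · intro p q _
    have hz : (Polynomial.C c).coeff (q+1) = 0 := by
      rw [Polynomial.coeff_C]
      simp
    rw [hz, mul_zero]
    exact mul_nonneg (hnn _) (hnn _)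

lemma coeff_linear_mul (a b : ℝ) (P : Polynomial ℝ) (i : ℕ) :
    ((Polynomial.C a + Polynomial.C b * Polynomial.X) * P).coeff i
      = a * P.coeff i + b * (if i = 0 then 0 else P.coeff (i-1)) := by
  rw [add_mul, Polynomial.coeff_add, Polynomial.coeff_C_mul]
  congr 1
  rw [mul_assoc, Polynomial.coeff_C_mul]
  congr 1
  rcases i with _ | i
  · simp
  · rw [Polynomial.coeff_X_mul]
    simp

lemma posLC_linear_mul {a b : ℝ} (ha : 0 ≤ a) (hb : 0 ≤ b) {P : Polynomial ℝ}
    (hP : PosLC P) : PosLC ((Polynomial.C a + Polynomial.C b * Polynomial.X) * P) := by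
  obtain ⟨hpos, hQ⟩ := hP
  have c0' : ((Polynomial.C a + Polynomial.C b * Polynomial.X) * P).coeff 0 = a * P.coeff 0 := by
    rw [coeff_linear_mul]; simp
  have cs : ∀ i, ((Polynomial.C a + Polynomial.C b * Polynomial.X) * P).coeff (i+1)
      = a * P.coeff (i+1) + b * P.coeff i := by
    intro i; rw [coeff_linear_mul]; simp
  constructor
  · intro i
    rcases i with _ | i
    · rw [c0']; exact mul_nonneg ha (hpos 0)
    · rw [cs i]
      exact add_nonneg (mul_nonneg ha (hpos _)) (mul_nonneg hb (hpos _))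
  · intro p q hpq
    rcases p with _ | p
    · -- p = 0
      rcases q with _ | q
      · -- q = 0 : d0 * d1 ≤ d1 * d0
        rw [mul_comm]
      · rw [c0', cs q, cs 0, cs (q+1)]
        have hq1 : P.coeff 0 * P.coeff (q+2) ≤ P.coeff 1 * P.coeff (q+1) := hQ 0 (q+1) (by omega)
        have e1 : a*a*(P.coeff 0 * P.coeff (q+2)) ≤ a*a*(P.coeff 1 * P.coeff (q+1)) :=
          mul_le_mul_of_nonneg_left hq1 (by positivity)
        have nn1 : 0 ≤ a*b*(P.coeff 1 * P.coeff q) := by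
          apply mul_nonneg (by positivity)
          exact mul_nonneg (hpos _) (hpos _)
        have nn2 : 0 ≤ b*b*(P.coeff 0 * P.coeff q) := by
          apply mul_nonneg (by positivity)
          exact mul_nonneg (hpos _) (hpos _)
        nlinarith [e1, nn1, nn2]
    · -- p = p'+1 ≥ 1, so q = q'+1
      rcases q with _ | q
      · omega
      have hpq' : p ≤ q := by omega
      rw [cs p, cs q, cs (p+1), cs (q+1)]
      have h1 : P.coeff (p+1) * P.coeff (q+2) ≤ P.coeff (p+2) * P.coeff (q+1) :=
        hQ (p+1) (q+1) (by omega)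
      have h2 : P.coeff p * P.coeff (q+1) ≤ P.coeff (p+1) * P.coeff q := hQ p q hpq'
      have hmid : P.coeff p * P.coeff (q+2) ≤ P.coeff (p+2) * P.coeff q := by
        rcases eq_or_lt_of_le hpq' with he | hlt
        · subst he
          rw [mul_comm]
        · have ha1 : P.coeff p * P.coeff (q+2) ≤ P.coeff (p+1) * P.coeff (q+1) :=
            hQ p (q+1) (by omega)
          have ha2 : P.coeff (p+1) * P.coeff (q+1) ≤ P.coeff (p+2) * P.coeff q :=
            hQ (p+1) q (by omega)
          linarith
      have e1 : a*a*(P.coeff (p+1) * P.coeff (q+2)) ≤ a*a*(P.coeff (p+2) * P.coeff (q+1)) :=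
        mul_le_mul_of_nonneg_left h1 (by positivity)
      have e2 : b*b*(P.coeff p * P.coeff (q+1)) ≤ b*b*(P.coeff (p+1) * P.coeff q) :=
        mul_le_mul_of_nonneg_left h2 (by positivity)
      have e3 : a*b*(P.coeff p * P.coeff (q+2)) ≤ a*b*(P.coeff (p+2) * P.coeff q) :=
        mul_le_mul_of_nonneg_left hmid (by positivity)
      nlinarith [e1, e2, e3]

lemma posLC_C_mul {c : ℝ} (hc : 0 ≤ c) {P : Polynomial ℝ} (hP : PosLC P) :
    PosLC (Polynomial.C c * P) := by
  obtain ⟨hpos, hQ⟩ := hP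
  constructor
  · intro i
    rw [Polynomial.coeff_C_mul]
    exact mul_nonneg hc (hpos _)
  · intro p q hpq
    simp only [Polynomial.coeff_C_mul]
    calc c * P.coeff p * (c * P.coeff (q+1)) = c*c*(P.coeff p * P.coeff (q+1)) := by ring
      _ ≤ c*c*(P.coeff (p+1) * P.coeff q) := mul_le_mul_of_nonneg_left (hQ p q hpq) (by positivity)
      _ = c * P.coeff (p+1) * (c * P.coeff q) := by ring

lemma posLC_one : PosLC (1 : Polynomial ℝ) := by
  rw [← Polynomial.C_1]
  exact posLC_C zero_le_one

lemma posLC_X_add_one_pow_mul (t : ℕ) {P : Polynomial ℝ} (hP : PosLC P) :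
    PosLC ((Polynomial.X + 1)^t * P) := by
  induction t with
  | zero => simpa using hP
  | succ t ih =>
    have : (Polynomial.X + 1)^(t+1) * P
        = (Polynomial.C 1 + Polynomial.C 1 * Polynomial.X) * ((Polynomial.X + 1)^t * P) := by
      rw [pow_succ]
      ring_nf
      rw [Polynomial.C_1]
      ring
    rw [this]
    exact posLC_linear_mul zero_le_one zero_le_one ih

lemma posLC_prod_linear (s : Finset ℕ) (f g : ℕ → ℝ) (hf : ∀ k, 0 ≤ f k) (hg : ∀ k, 0 ≤ g k) :
    PosLC (∏ k ∈ s, (Polynomial.C (f k) + Polynomial.C (g k) * Polynomial.X)) := by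
  induction s using Finset.cons_induction with
  | empty => simpa using posLC_one
  | cons a s ha ih =>
    rw [Finset.prod_cons]
    exact posLC_linear_mul (hf a) (hg a) ih

lemma posLC_Qpoly (hn : 1 ≤ n) : PosLC (Qpoly n) := by
  unfold Qpoly
  apply posLC_C_mul (by positivity)
  apply posLC_X_add_one_pow_mul
  apply posLC_prod_linear
  · intro k
    unfold rv
    positivity
  · intro k
    unfold rv
    positivity

lemma posLC_HPoly (hn : 1 ≤ n) : PosLC (HPoly n) := by
  rw [HPoly_eq_Qpoly n hn]
  exact posLC_Qpoly n hn

lemma neg_one_pow_sub (a b : ℕ) (h : b ≤ a) : (-1:ℤ)^(a-b) = (-1)^a * (-1)^b := by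
  have h2 : ((-1:ℤ)^b) * ((-1:ℤ)^b) = 1 := by rw [← mul_pow]; norm_num
  calc (-1:ℤ)^(a-b) = (-1)^(a-b) * ((-1)^b * (-1)^b) := by rw [h2, mul_one]
    _ = ((-1)^(a-b) * (-1)^b) * (-1)^b := by ring
    _ = (-1)^a * (-1)^b := by rw [← pow_add, show a-b+b = a by omega]

lemma C1' (n : ℕ) (hn : 1 ≤ n) (k : ℕ) (hk : k ≤ n - 1) :
    ((n - 1 + 2*k).choose (2*k) : ℤ)
      = ∑ j ∈ range n, ((n.choose (2*j)):ℤ) * (((n-1-j+k).choose (n-1) : ℤ)) := by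
  have h := C1 (n-1) k
  rw [show n - 1 + 1 = n by omega] at h
  rw [h]
  have hcong : ∑ j ∈ range (k+1), ((n.choose (2*j)):ℤ) * (((n-1 + (k-j)).choose (n-1) : ℤ))
      = ∑ j ∈ range (k+1), ((n.choose (2*j)):ℤ) * (((n-1-j+k).choose (n-1) : ℤ)) := by
    apply Finset.sum_congr rfl
    intro j hj
    have hjk : j ≤ k := Nat.lt_succ_iff.mp (Finset.mem_range.mp hj)
    have : n-1 + (k-j) = n-1-j+k := by omega
    rw [this]
  rw [hcong]
  apply Finset.sum_subset
  · apply Finset.range_subset_range.mpr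
    omega
  · intro j hjn hjk
    have hj1 : k + 1 ≤ j := by
      by_contra hc
      exact hjk (Finset.mem_range.mpr (by omega))
    have hj2 : j < n := Finset.mem_range.mp hjn
    have : (n-1-j+k).choose (n-1) = 0 := Nat.choose_eq_zero_of_lt (by omega)
    rw [this]
    simp

lemma OCPS_int (n : ℕ) (hn : 1 ≤ n) (q : ℕ) (hq1 : 1 ≤ q) (hqn : q ≤ n) :
    OCPS n q = ∑ j ∈ range n, ((n.choose (2*j)):ℤ) * (((n-1-j).choose (n-q) : ℤ)) := by
  unfold OCPS
  have step1 : ∀ k ∈ range q,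
      (-1:ℤ)^(q-1-k) * ((q-1).choose k : ℤ) * ((n-1+2*k).choose (2*k) : ℤ)
      = ∑ j ∈ range n, (-1:ℤ)^(q-1) * (-1:ℤ)^k * ((q-1).choose k : ℤ)
          * (((n.choose (2*j)):ℤ) * (((n-1-j+k).choose (n-1)):ℤ)) := by
    intro k hk
    have hkq : k ≤ q - 1 := by
      have := Finset.mem_range.mp hk
      omega
    rw [neg_one_pow_sub (q-1) k hkq, C1' n hn k (by omega), Finset.mul_sum]
  rw [Finset.sum_congr rfl step1, Finset.sum_comm]
  apply Finset.sum_congr rfl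
  intro j hj
  have inner : ∑ k ∈ range q, (-1:ℤ)^(q-1) * (-1:ℤ)^k * ((q-1).choose k : ℤ)
        * (((n.choose (2*j)):ℤ) * (((n-1-j+k).choose (n-1)):ℤ))
      = (-1:ℤ)^(q-1) * ((n.choose (2*j)):ℤ)
        * ∑ k ∈ range q, (-1:ℤ)^k * ((q-1).choose k : ℤ) * (((n-1-j+k).choose (n-1)):ℤ) := by
    rw [Finset.mul_sum]
    apply Finset.sum_congr rfl
    intro k _
    ring
  rw [inner]
  have halt : ∑ k ∈ range q, (-1:ℤ)^k * ((q-1).choose k : ℤ) * (((n-1-j+k).choose (n-1)):ℤ)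
      = (-1:ℤ)^(q-1) * ((n-1-j).choose (n-q) : ℤ) := by
    have := alt_sum (q-1) (n-1-j) (n-q)
    rw [show (q-1)+1 = q by omega] at this
    rw [← this]
    apply Finset.sum_congr rfl
    intro k _
    have e : n-q+(q-1) = n-1 := by omega
    rw [e]
  rw [halt]
  have : (-1:ℤ)^(q-1) * ((-1:ℤ)^(q-1)) = 1 := by rw [← mul_pow]; norm_num
  calc (-1:ℤ)^(q-1) * ((n.choose (2*j)):ℤ)
        * ((-1:ℤ)^(q-1) * ((n-1-j).choose (n-q) : ℤ))
      = ((-1:ℤ)^(q-1) * ((-1:ℤ)^(q-1))) * (((n.choose (2*j)):ℤ) * ((n-1-j).choose (n-q) : ℤ)) := by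
        ring
    _ = ((n.choose (2*j)):ℤ) * ((n-1-j).choose (n-q) : ℤ) := by rw [this, one_mul]

lemma OCPS_coeff (n : ℕ) (hn : 1 ≤ n) (q : ℕ) (hq1 : 1 ≤ q) (hqn : q ≤ n) :
    ((OCPS n q : ℤ) : ℝ) = (HPoly n).coeff (q-1) := by
  rw [OCPS_int n hn q hq1 hqn, HPoly_coeff]
  push_cast
  have step : ∀ j ∈ range n, ((n.choose (2*j)):ℝ) * (((n-1-j).choose (n-q) : ℕ) : ℝ)
      = ((n.choose (2*j)):ℝ) * (if j ≤ q-1 then (((n-1-j).choose (q-1-j) : ℕ) : ℝ) else 0) := by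
    intro j hj
    have hjn : j < n := Finset.mem_range.mp hj
    split_ifs with h
    · congr 2
      have hsym := Nat.choose_symm (show q-1-j ≤ n-1-j by omega)
      rw [show (n-1-j) - (q-1-j) = n-q by omega] at hsym
      rw [hsym]
    · rw [show (n-1-j).choose (n-q) = 0 from Nat.choose_eq_zero_of_lt (by omega)]
      simp
  rw [Finset.sum_congr rfl step]
  symm
  apply Finset.sum_subset
  · apply Finset.range_subset_range.mpr
    have : mval n = n / 2 := rfl
    omega
  · intro j hjn hjm
    have hj1 : mval n + 1 ≤ j := by
      by_contra hc
      exact hjm (Finset.mem_range.mpr (by omega))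
    have h2j : n < 2*j := by
      have : mval n = n / 2 := rfl
      omega
    rw [Nat.choose_eq_zero_of_lt h2j]
    simp

theorem OCPS_log_concave (n : ℕ) (hn : 1 ≤ n) :
    ∀ p : ℕ, 2 ≤ p → p ≤ n - 1 →
      OCPS n p ^ 2 ≥ OCPS n (p - 1) * OCPS n (p + 1) := by
  intro p hp2 hpn
  have hn3 : 3 ≤ n := by omega
  have h1 := OCPS_coeff n hn (p-1) (by omega) (by omega)
  have h2 := OCPS_coeff n hn p (by omega) (by omega)
  have h3 := OCPS_coeff n hn (p+1) (by omega) (by omega)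
  rw [show p-1-1 = p-2 by omega] at h1
  rw [show p+1-1 = p by omega] at h3
  obtain ⟨hpos, hQ⟩ := posLC_HPoly n hn
  have key := hQ (p-2) (p-1) (by omega)
  rw [show p-2+1 = p-1 by omega, show p-1+1 = p by omega] at key
  have hreal : ((OCPS n (p-1) * OCPS n (p+1) : ℤ) : ℝ) ≤ ((OCPS n p ^ 2 : ℤ) : ℝ) := by
    push_cast
    rw [h1, h2, h3, sq]
    exact key
  exact_mod_cast hreal
end
end
end

section
/- If the generating polynomial ∑_{k} a_k y^k of a finite sequence of nonnegative real numbers (a_k) has only real zeros, then the sequence (a_k) is logarithmically concave: a_k² ≥ a_{k-1} a_{k+1} for all k. -/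
open Finset Polynomial

private lemma coeff_linear_mul_zero (r : ℝ) (p : ℝ[X]) :
    ((X + C r) * p).coeff 0 = r * p.coeff 0 := by
  rw [add_mul, coeff_add, coeff_C_mul, mul_coeff_zero, coeff_X_zero, zero_mul, zero_add]

private lemma coeff_linear_mul_succ (r : ℝ) (p : ℝ[X]) (k : ℕ) :
    ((X + C r) * p).coeff (k + 1) = p.coeff k + r * p.coeff (k + 1) := by
  rw [add_mul, coeff_add, coeff_C_mul, coeff_X_mul]

private def Good (p : ℝ[X]) : Prop :=
  (∀ k, 0 ≤ p.coeff k) ∧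
  (∀ k, p.coeff (k + 1) ^ 2 ≥ p.coeff k * p.coeff (k + 2)) ∧
  (∃ e m : ℕ, e ≤ m ∧ ∀ k, 0 < p.coeff k ↔ e ≤ k ∧ k ≤ m)

private lemma good_chain {p : ℝ[X]} (hp : Good p) (k : ℕ) :
    p.coeff (k + 1) * p.coeff (k + 2) ≥ p.coeff k * p.coeff (k + 3) := by
  obtain ⟨hnn, hlc, e, m, hem, hsupp⟩ := hp
  rcases eq_or_lt_of_le (hnn k) with h0 | h0
  · rw [← h0, zero_mul]; exact mul_nonneg (hnn _) (hnn _)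
  rcases eq_or_lt_of_le (hnn (k + 3)) with h3 | h3
  · rw [← h3, mul_zero]; exact mul_nonneg (hnn _) (hnn _)
  have hk := (hsupp k).mp h0
  have hk3 := (hsupp (k + 3)).mp h3
  have h1 : 0 < p.coeff (k + 1) := (hsupp (k + 1)).mpr ⟨by omega, by omega⟩
  have h2 : 0 < p.coeff (k + 2) := (hsupp (k + 2)).mpr ⟨by omega, by omega⟩
  have A := hlc k
  have B := hlc (k + 1)
  have hAB := mul_le_mul A B (mul_nonneg (hnn _) (hnn _)) (sq_nonneg _)
  nlinarith [mul_pos h1 h2]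

private lemma good_prod (s : Multiset ℝ) (hs : ∀ r ∈ s, 0 ≤ r) :
    Good ((s.map fun r => X + C r).prod) := by
  induction s using Multiset.induction_on with
  | empty =>
    refine ⟨?_, ?_, 0, 0, le_refl 0, ?_⟩ <;> intro k <;>
      simp only [Multiset.map_zero, Multiset.prod_zero, coeff_one]
    · positivity
    · simp
    · rcases k with _ | k <;> simp
  | cons r t ih =>
    have hr : 0 ≤ r := hs r (Multiset.mem_cons_self r t)
    have ht : ∀ x ∈ t, 0 ≤ x := fun x hx => hs x (Multiset.mem_cons_of_mem hx)
    obtain ⟨hnn, hlc, e, m, hem, hsupp⟩ := ih ht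
    have hchain := good_chain ⟨hnn, hlc, e, m, hem, hsupp⟩
    set p := (t.map fun r => X + C r).prod with hp
    have hrw : ((r ::ₘ t).map fun r => X + C r).prod = (X + C r) * p := by
      rw [Multiset.map_cons, Multiset.prod_cons]
    rw [hrw]
    refine ⟨?_, ?_, ?_⟩
    · intro k
      rcases k with _ | k
      · rw [coeff_linear_mul_zero]; exact mul_nonneg hr (hnn 0)
      · rw [coeff_linear_mul_succ]
        exact add_nonneg (hnn k) (mul_nonneg hr (hnn _))
    · intro k
      rcases k with _ | k
      · rw [coeff_linear_mul_zero, coeff_linear_mul_succ, coeff_linear_mul_succ]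
        have := hlc 0
        nlinarith [mul_nonneg hr (mul_nonneg (hnn 0) (hnn 1)), sq_nonneg (p.coeff 0),
          mul_nonneg (mul_nonneg hr hr) (sub_nonneg.mpr this)]
      · rw [coeff_linear_mul_succ, coeff_linear_mul_succ, coeff_linear_mul_succ]
        have A := hlc k
        have B := hlc (k + 1)
        have C := hchain k
        nlinarith [mul_nonneg hr (sub_nonneg.mpr C),
          mul_nonneg (mul_nonneg hr hr) (sub_nonneg.mpr B)]
    · rcases eq_or_lt_of_le hr with hr0 | hr0
      · refine ⟨e + 1, m + 1, by omega, ?_⟩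
        intro k
        rcases k with _ | k
        · rw [coeff_linear_mul_zero, ← hr0, zero_mul]
          constructor
          · intro h; exact absurd h (lt_irrefl 0)
          · intro h; omega
        · rw [coeff_linear_mul_succ, ← hr0, zero_mul, add_zero]
          rw [hsupp k]; omega
      · refine ⟨e, m + 1, by omega, ?_⟩
        intro k
        rcases k with _ | k
        · rw [coeff_linear_mul_zero]
          constructor
          · intro h
            have : 0 < p.coeff 0 := by
              by_contra hc
              push_neg at hc
              have h0 : p.coeff 0 = 0 := le_antisymm hc (hnn 0)
              rw [h0, mul_zero] at h
              exact absurd h (lt_irrefl 0)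
            have := (hsupp 0).mp this
            omega
          · intro ⟨h1, _⟩
            have : 0 < p.coeff 0 := (hsupp 0).mpr ⟨h1, by omega⟩
            positivity
        · rw [coeff_linear_mul_succ]
          have hor : 0 < p.coeff k + r * p.coeff (k + 1) ↔
              (0 < p.coeff k ∨ 0 < p.coeff (k + 1)) := by
            constructor
            · intro h
              by_contra hc
              push_neg at hc
              have e1 : p.coeff k = 0 := le_antisymm hc.1 (hnn k)
              have e2 : p.coeff (k + 1) = 0 := le_antisymm hc.2 (hnn (k + 1))
              rw [e1, e2, mul_zero, add_zero] at h
              exact absurd h (lt_irrefl 0)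
            · rintro (h | h)
              · have := mul_nonneg hr (hnn (k + 1)); linarith
              · have := hnn k; nlinarith
          rw [hor, hsupp k, hsupp (k + 1)]
          omega

theorem log_concave_of_real_rooted (n : ℕ) (a : ℕ → ℝ)
    (ha : ∀ k, k ≤ n → 0 ≤ a k)
    (hroots : ∀ z ∈ (((∑ k ∈ Finset.range (n + 1),
        Polynomial.C (a k) * Polynomial.X ^ k)).map (algebraMap ℝ ℂ)).roots, z.im = 0) :
    ∀ k, 1 ≤ k → k ≤ n - 1 → a k ^ 2 ≥ a (k - 1) * a (k + 1) := by
  set P : ℝ[X] := ∑ k ∈ Finset.range (n + 1), Polynomial.C (a k) * Polynomial.X ^ k with hP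
  have hcoeff : ∀ k, k ≤ n → P.coeff k = a k := by
    intro k hk
    rw [hP, finset_sum_coeff]
    simp only [coeff_C_mul, coeff_X_pow]
    rw [Finset.sum_eq_single k]
    · simp
    · intro b _ hb; simp [Ne.symm hb]
    · intro h; exact absurd (Finset.mem_range.mpr (by omega)) h
  intro k hk1 hkn
  have hn2 : 2 ≤ n := by omega
  obtain ⟨j, rfl⟩ : ∃ j, k = j + 1 := ⟨k - 1, by omega⟩
  have hj2 : j + 2 ≤ n := by omega
  simp only [Nat.add_sub_cancel]
  rw [← hcoeff j (by omega), ← hcoeff (j + 1) (by omega), ← hcoeff (j + 2) (by omega)]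
  by_cases hP0 : P = 0
  · rw [hP0]; simp
  -- P splits over ℝ
  have hsplit : P.Splits := by
    apply Splits.of_splits_map (algebraMap ℝ ℂ) (IsAlgClosed.splits _)
    intro z hz
    exact ⟨z.re, Complex.ext rfl (by simp [hroots z hz])⟩
  -- roots are nonpositive
  have hroots_nonpos : ∀ r ∈ P.roots, r ≤ 0 := by
    intro r hr
    by_contra hc
    push_neg at hc
    have heval : P.eval r = 0 := (mem_roots hP0).mp hr
    rw [hP, eval_finset_sum] at heval
    simp only [eval_mul, eval_C, eval_pow, eval_X] at heval
    have hzero : ∀ i ∈ Finset.range (n + 1), a i * r ^ i = 0 := by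
      rw [← Finset.sum_eq_zero_iff_of_nonneg]
      · exact heval
      · intro i hi
        exact mul_nonneg (ha i (by simpa using Nat.lt_succ_iff.mp (Finset.mem_range.mp hi)))
          (pow_nonneg hc.le i)
    apply hP0
    rw [hP]
    apply Finset.sum_eq_zero
    intro i hi
    have hai : a i = 0 := by
      have := hzero i hi
      have hrpow : (0:ℝ) < r ^ i := pow_pos hc i
      rcases mul_eq_zero.mp this with h | h
      · exact h
      · exact absurd h (ne_of_gt hrpow)
    rw [hai, map_zero, zero_mul]
  -- factorization
  have hfac : P = Polynomial.C P.leadingCoeff * (P.roots.map fun r => X - C r).prod :=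
    hsplit.eq_prod_roots
  set s : Multiset ℝ := P.roots.map fun r => -r with hs
  have hs_nonneg : ∀ r ∈ s, 0 ≤ r := by
    intro r hr
    rw [hs] at hr
    obtain ⟨x, hx, rfl⟩ := Multiset.mem_map.mp hr
    linarith [hroots_nonpos x hx]
  have hmaps : (s.map fun r => X + C r) = P.roots.map fun r => X - C r := by
    rw [hs, Multiset.map_map]
    apply Multiset.map_congr rfl
    intro x _
    simp [sub_eq_add_neg]
  have hfac2 : P = Polynomial.C P.leadingCoeff * (s.map fun r => X + C r).prod :=
    hfac.trans (by rw [hmaps])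
  set Q : ℝ[X] := (s.map fun r => X + C r).prod with hQ
  have hgood := good_prod s hs_nonneg
  have hlc := hgood.2.1 j
  rw [← hQ] at hlc
  have hPc : ∀ i, P.coeff i = P.leadingCoeff * Q.coeff i := by
    intro i
    conv_lhs => rw [hfac2]
    rw [coeff_C_mul]
  rw [hPc j, hPc (j + 1), hPc (j + 2)]
  nlinarith [sq_nonneg P.leadingCoeff,
    mul_le_mul_of_nonneg_left hlc (sq_nonneg P.leadingCoeff)]
end

section
/- For integers n ≥ 2 and g ≥ 1, the binomial identity C(2(g-1)+n, n) = ∑_{i=0}^{n} C(n+1, 2(i-1)) · C(g+n-i, n) holds, where C(n+1, 2(i-1)) is interpreted as 0 when i = 0 (since 2(i-1) < 0). -/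
open Finset

lemma SO (n : ℕ) : ∀ m : ℕ,
    (∑ k ∈ range (n+1), (n+1).choose (2*k) * (m+n-k).choose n = (2*m+n).choose n) ∧
    (∑ k ∈ range (n+1), (n+1).choose (2*k+1) * (m+n-k).choose n = (2*m+n+1).choose n) := by
  induction n with
  | zero => intro m; simp
  | succ n ih =>
    intro m
    induction m with
    | zero =>
      constructor
      · rw [Finset.sum_range_succ']
        have h1 : ∀ j ∈ range (n+1),
            (n+2).choose (2*(j+1)) * (0+(n+1)-(j+1)).choose (n+1) = 0 := by
          intro j hj
          have : (0+(n+1)-(j+1)) < n+1 := by omega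
          rw [Nat.choose_eq_zero_of_lt this, mul_zero]
        rw [Finset.sum_eq_zero h1]
        simp
      · rw [Finset.sum_range_succ']
        have h1 : ∀ j ∈ range (n+1),
            (n+2).choose (2*(j+1)+1) * (0+(n+1)-(j+1)).choose (n+1) = 0 := by
          intro j hj
          have : (0+(n+1)-(j+1)) < n+1 := by omega
          rw [Nat.choose_eq_zero_of_lt this, mul_zero]
        rw [Finset.sum_eq_zero h1]
        simp [Nat.succ_sub_one]
    | succ m ihm =>
      have hkey : ∀ a b : ℕ, (a+2).choose (b+1) = a.choose (b+1) + a.choose b + (a+1).choose b := by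
        intro a b
        rw [Nat.choose_succ_succ (a+1), Nat.choose_succ_succ a]
        ring
      constructor
      · have hsplit : ∀ k ∈ range (n+1+1), (n+1+1).choose (2*k) * ((m+1)+(n+1)-k).choose (n+1)
            = (n+1+1).choose (2*k) * ((m+(n+1)-k).choose (n+1)) + (n+1+1).choose (2*k) * ((m+n+1-k).choose n) := by
          intro k hk
          have hk' : k ≤ n+1 := by have := mem_range.mp hk; omega
          have h1 : (m+1)+(n+1)-k = (m+n+1-k)+1 := by omega
          have h2 : m+(n+1)-k = m+n+1-k := by omega
          rw [h1, h2, Nat.choose_succ_succ]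
          ring
        rw [Finset.sum_congr rfl hsplit, Finset.sum_add_distrib, ihm.1]
        have hT : (∑ k ∈ range (n+1+1), (n+1+1).choose (2*k) * ((m+n+1-k).choose n))
            = (∑ j ∈ range (n+1), (n+1).choose (2*j+1) * (m+n-j).choose n)
              + ((∑ j ∈ range (n+1), (n+1).choose (2*j+2) * (m+n-j).choose n)
                + (m+n+1).choose n) := by
          rw [Finset.sum_range_succ']
          have hterm : ∀ j ∈ range (n+1), (n+1+1).choose (2*(j+1)) * ((m+n+1-(j+1)).choose n)
              = (n+1).choose (2*j+1) * (m+n-j).choose n + (n+1).choose (2*j+2) * (m+n-j).choose n := by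
            intro j hj
            have h1 : 2*(j+1) = (2*j+1)+1 := by ring
            have h2 : m+n+1-(j+1) = m+n-j := by omega
            rw [h1, h2, Nat.choose_succ_succ]
            ring
          rw [Finset.sum_congr rfl hterm, Finset.sum_add_distrib]
          simp [add_assoc]
        rw [hT]
        have hA := (ih m).2
        have hB : (∑ j ∈ range (n+1), (n+1).choose (2*j+2) * (m+n-j).choose n) + (m+n+1).choose n
            = (2*(m+1)+n).choose n := by
          have h := (ih (m+1)).1
          rw [Finset.sum_range_succ'] at h
          have hterm : ∀ j ∈ range n, (n+1).choose (2*(j+1)) * ((m+1)+n-(j+1)).choose n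
              = (n+1).choose (2*j+2) * (m+n-j).choose n := by
            intro j hj
            have h1 : 2*(j+1) = 2*j+2 := by ring
            have h2 : (m+1)+n-(j+1) = m+n-j := by omega
            rw [h1, h2]
          rw [Finset.sum_congr rfl hterm] at h
          rw [Finset.sum_range_succ]
          have hz : (n+1).choose (2*n+2) = 0 := Nat.choose_eq_zero_of_lt (by omega)
          rw [hz]
          simp only [mul_zero, zero_mul, add_zero]
          have h3 : (m+1)+n-0 = m+n+1 := by omega
          rw [h3] at h
          simpa using h
        rw [hA, hB]
        have e1 : 2*(m+1)+(n+1) = (2*m+n+1)+2 := by ring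
        have e2 : 2*(m+1)+n = (2*m+n+1)+1 := by ring
        have e3 : 2*m+(n+1) = 2*m+n+1 := by ring
        rw [e1, e2, e3, hkey]
        ring
      · have hsplit : ∀ k ∈ range (n+1+1), (n+1+1).choose (2*k+1) * ((m+1)+(n+1)-k).choose (n+1)
            = (n+1+1).choose (2*k+1) * ((m+(n+1)-k).choose (n+1)) + (n+1+1).choose (2*k+1) * ((m+n+1-k).choose n) := by
          intro k hk
          have hk' : k ≤ n+1 := by have := mem_range.mp hk; omega
          have h1 : (m+1)+(n+1)-k = (m+n+1-k)+1 := by omega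
          have h2 : m+(n+1)-k = m+n+1-k := by omega
          rw [h1, h2, Nat.choose_succ_succ (m+n+1-k) n]
          ring
        rw [Finset.sum_congr rfl hsplit, Finset.sum_add_distrib, ihm.2]
        have hT : (∑ k ∈ range (n+1+1), (n+1+1).choose (2*k+1) * ((m+n+1-k).choose n))
            = (∑ k ∈ range (n+1+1), (n+1).choose (2*k) * (m+n+1-k).choose n)
              + (∑ k ∈ range (n+1+1), (n+1).choose (2*k+1) * (m+n+1-k).choose n) := by
          have hterm : ∀ k ∈ range (n+1+1), (n+1+1).choose (2*k+1) * ((m+n+1-k).choose n)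
              = (n+1).choose (2*k) * (m+n+1-k).choose n + (n+1).choose (2*k+1) * (m+n+1-k).choose n := by
            intro k hk
            rw [Nat.choose_succ_succ (n+1) (2*k)]
            ring
          rw [Finset.sum_congr rfl hterm, Finset.sum_add_distrib]
        rw [hT]
        have hS : (∑ k ∈ range (n+1+1), (n+1).choose (2*k) * (m+n+1-k).choose n)
            = (2*(m+1)+n).choose n := by
          rw [Finset.sum_range_succ]
          have hz : (n+1).choose (2*(n+1)) = 0 := Nat.choose_eq_zero_of_lt (by omega)
          rw [hz]
          simp only [zero_mul, add_zero]
          have h := (ih (m+1)).1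
          have hterm : ∀ k ∈ range (n+1), (n+1).choose (2*k) * ((m+1)+n-k).choose n
              = (n+1).choose (2*k) * (m+n+1-k).choose n := by
            intro k hk
            have h2 : (m+1)+n-k = m+n+1-k := by omega
            rw [h2]
          rw [Finset.sum_congr rfl hterm] at h
          exact h
        have hO : (∑ k ∈ range (n+1+1), (n+1).choose (2*k+1) * (m+n+1-k).choose n)
            = (2*(m+1)+n+1).choose n := by
          rw [Finset.sum_range_succ]
          have hz : (n+1).choose (2*(n+1)+1) = 0 := Nat.choose_eq_zero_of_lt (by omega)
          rw [hz]
          simp only [zero_mul, add_zero]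
          have h := (ih (m+1)).2
          have hterm : ∀ k ∈ range (n+1), (n+1).choose (2*k+1) * ((m+1)+n-k).choose n
              = (n+1).choose (2*k+1) * (m+n+1-k).choose n := by
            intro k hk
            have h2 : (m+1)+n-k = m+n+1-k := by omega
            rw [h2]
          rw [Finset.sum_congr rfl hterm] at h
          exact h
        rw [hS, hO]
        have e1 : 2*(m+1)+(n+1)+1 = (2*m+n+2)+2 := by ring
        have e2 : 2*(m+1)+n+1 = (2*m+n+2)+1 := by ring
        have e3 : 2*m+(n+1)+1 = 2*m+n+2 := by ring
        have e4 : 2*(m+1)+n = 2*m+n+2 := by ring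
        rw [e1, e2, e3, e4, hkey (2*m+n+2) n]
        ring

theorem hstar_expansion (n g : ℕ) (hn : 2 ≤ n) (hg : 1 ≤ g) :
    (2 * (g - 1) + n).choose n =
      ∑ i ∈ Finset.range (n + 1),
        (if i = 0 then 0 else (n + 1).choose (2 * (i - 1))) * (g + n - i).choose n := by
  obtain ⟨m, rfl⟩ : ∃ m, g = m + 1 := ⟨g - 1, by omega⟩
  have h := (SO n m).1
  rw [Finset.sum_range_succ] at h
  have hz : (n+1).choose (2*n) = 0 := Nat.choose_eq_zero_of_lt (by omega)
  rw [hz, zero_mul, add_zero] at h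
  rw [Finset.sum_range_succ']
  simp only [if_pos rfl, if_true, zero_mul, add_zero, Nat.add_sub_cancel]
  rw [← h]
  apply Finset.sum_congr rfl
  intro j hj
  have e2 : m + 1 + n - (j + 1) = m + n - j := by omega
  rw [if_neg (by omega), e2]
end

section
/- For natural numbers i ≥ 1 and n, the identity ∑_{l=0}^{i} (-1)^{i-l} C(n+2l, 2l) C(n+1, i-l) = C(n+1, 2i) holds when n ≥ 2; more precisely, the left-hand side equals Γ(-n-1+2i)/(Γ(-n-1)Γ(2i+1)) which coincides with C(n+1, 2i) for 2i ≤ n+1 and with 0 for 2i > n+1 (when n ≥ 2). -/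
open Finset

open PowerSeries in
private lemma hstar_aux_ps (n : ℕ) :
    (PowerSeries.mk fun k => ((n + k).choose n : ℤ)) * (1 - X ^ 2) ^ (n + 1)
      = (1 + X) ^ (n + 1) := by
  have h1 : (PowerSeries.mk fun k => ((n + k).choose n : ℤ)) * (1 - X) ^ (n + 1) = 1 := by
    have := (PowerSeries.invOneSubPow ℤ (n + 1)).val_inv
    rwa [PowerSeries.invOneSubPow_val_succ_eq_mk_add_choose,
      PowerSeries.invOneSubPow_inv_eq_one_sub_pow] at this
  have h2 : (1 - X ^ 2 : ℤ⟦X⟧) = (1 - X) * (1 + X) := by ring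
  rw [h2, mul_pow, ← mul_assoc, h1, one_mul]

open PowerSeries in
private lemma hstar_coeff_rhs (n i : ℕ) :
    PowerSeries.coeff (R := ℤ) (2 * i) ((1 + PowerSeries.X) ^ (n + 1) : ℤ⟦X⟧)
      = ((n + 1).choose (2 * i) : ℤ) := by
  rw [add_comm (1 : ℤ⟦X⟧) PowerSeries.X, add_pow, map_sum]
  simp only [one_pow, mul_one]
  have : ∀ k, (PowerSeries.coeff (R := ℤ) (2 * i)) ((PowerSeries.X : ℤ⟦X⟧) ^ k * ((n + 1).choose k : ℤ⟦X⟧))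
      = if 2 * i = k then ((n + 1).choose k : ℤ) else 0 := by
    intro k
    rw [show ((((n + 1).choose k : ℕ) : ℤ⟦X⟧)) = PowerSeries.C (R := ℤ) (((n + 1).choose k : ℕ) : ℤ) by
        rw [map_natCast],
      PowerSeries.coeff_mul_C, PowerSeries.coeff_X_pow, ite_mul, one_mul, zero_mul]
  rw [Finset.sum_congr rfl fun k _ => this k, Finset.sum_ite_eq (Finset.range (n + 2)) (2 * i)
      (fun k => ((n + 1).choose k : ℤ))]
  split_ifs with h
  · rfl
  · rw [Finset.mem_range, not_lt] at h
    rw [Nat.choose_eq_zero_of_lt (by omega), Nat.cast_zero]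

open PowerSeries in
private lemma hstar_coeff_lhs (n i : ℕ) :
    PowerSeries.coeff (R := ℤ) (2 * i)
        ((PowerSeries.mk fun k => ((n + k).choose n : ℤ)) * (1 - PowerSeries.X ^ 2) ^ (n + 1) : ℤ⟦X⟧)
      = ∑ m ∈ Finset.range (n + 2), (-1 : ℤ) ^ m * ((n + 1).choose m : ℤ) *
          (if 2 * m ≤ 2 * i then ((n + (2 * i - 2 * m)).choose n : ℤ) else 0) := by
  set A : ℤ⟦X⟧ := PowerSeries.mk fun k => ((n + k).choose n : ℤ) with hA
  rw [show (1 - PowerSeries.X ^ 2 : ℤ⟦X⟧) = -PowerSeries.X ^ 2 + 1 by ring, add_pow,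
    Finset.mul_sum, map_sum]
  refine Finset.sum_congr rfl fun m _ => ?_
  have h1 : (A * ((-PowerSeries.X ^ 2 : ℤ⟦X⟧) ^ m * 1 ^ (n + 1 - m) * ((n + 1).choose m : ℤ⟦X⟧)))
      = PowerSeries.C (R := ℤ) ((-1) ^ m * ((n + 1).choose m : ℤ)) * (A * PowerSeries.X ^ (2 * m)) := by
    rw [neg_pow, pow_mul]
    ring_nf
    rw [map_mul]
    simp only [map_pow, map_neg, map_one, map_natCast]
    ring
  rw [h1, PowerSeries.coeff_C_mul, PowerSeries.coeff_mul_X_pow']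
  split_ifs with h
  · rw [hA, PowerSeries.coeff_mk]
  · ring

theorem hstar_coefficient_identity (n i : ℕ) (hn : 2 ≤ n) (hi : 1 ≤ i) :
    (∑ l ∈ Finset.range (i + 1),
        (-1 : ℤ) ^ (i - l) * ((n + 2 * l).choose (2 * l) : ℤ) * ((n + 1).choose (i - l) : ℤ))
      = ((n + 1).choose (2 * i) : ℤ) := by
  classical
  set f : ℕ → ℤ := fun m =>
    (-1 : ℤ) ^ m * ((n + 1).choose m : ℤ) *
      (if 2 * m ≤ 2 * i then ((n + (2 * i - 2 * m)).choose n : ℤ) else 0) with hf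
  have key : (∑ m ∈ Finset.range (n + 2), f m) = ((n + 1).choose (2 * i) : ℤ) := by
    have := congrArg (PowerSeries.coeff (R := ℤ) (2 * i)) (hstar_aux_ps n)
    rwa [hstar_coeff_rhs, hstar_coeff_lhs] at this
  -- the goal's sum equals ∑_{m ∈ range (i+1)} f m
  have hstep1 : (∑ l ∈ Finset.range (i + 1),
        (-1 : ℤ) ^ (i - l) * ((n + 2 * l).choose (2 * l) : ℤ) * ((n + 1).choose (i - l) : ℤ))
      = ∑ m ∈ Finset.range (i + 1), f m := by
    rw [← Finset.sum_range_reflect f (i + 1)]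
    refine Finset.sum_congr rfl fun l hl => ?_
    rw [Finset.mem_range] at hl
    have hl' : l ≤ i := by omega
    have e1 : i + 1 - 1 - l = i - l := by omega
    have e2 : 2 * (i - l) ≤ 2 * i := by omega
    have e3 : 2 * i - 2 * (i - l) = 2 * l := by omega
    have e4 : (n + 2 * l).choose (2 * l) = (n + 2 * l).choose n := by
      rw [← Nat.choose_symm (Nat.le_add_left (2 * l) n)]
      congr 1
      omega
    simp only [hf, e1, if_pos e2, e3, e4]
    ring
  -- pad both sums to a common range
  set N := max (i + 1) (n + 2) with hN
  have hpad1 : (∑ m ∈ Finset.range (i + 1), f m) = ∑ m ∈ Finset.range N, f m := by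
    refine Finset.sum_subset (Finset.range_subset_range.2 (le_max_left _ _)) fun m _ hm => ?_
    rw [Finset.mem_range, not_lt] at hm
    simp only [hf, if_neg (by omega : ¬ 2 * m ≤ 2 * i), mul_zero]
  have hpad2 : (∑ m ∈ Finset.range (n + 2), f m) = ∑ m ∈ Finset.range N, f m := by
    refine Finset.sum_subset (Finset.range_subset_range.2 (le_max_right _ _)) fun m _ hm => ?_
    rw [Finset.mem_range, not_lt] at hm
    simp only [hf]
    rw [Nat.choose_eq_zero_of_lt (by omega : n + 1 < m), Nat.cast_zero, mul_zero, zero_mul]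
  rw [hstep1, hpad1, ← hpad2, key]
end

section
/- For an integer-valued polynomial p of degree d with f*-coefficients defined by p(g) = ∑_{i=0}^{d} f*_i C(g-1, i) and h*-coefficients defined by p(g) = ∑_{i=0}^{d} h*_i C(g+d-i, d), the polynomial identity ∑_{i=0}^{d} h*_i z^i = p(0)(1-z)^{d+1} + ∑_{i=0}^{d} f*_i z^{i+1} (1-z)^{d-i} holds in ℚ[z]. -/
open Finset Polynomial fwdDiff

lemma natDegree_shift_sub_lt (q : ℚ[X]) (hq : q ≠ 0) (h0 : q.natDegree ≠ 0) :
    (q.comp (X + C 1) - q).natDegree < q.natDegree := by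
  have e1 : (X + C (1:ℚ)).natDegree = 1 := Polynomial.natDegree_X_add_C 1
  have e2 : (X + C (1:ℚ)).leadingCoeff = 1 := Polynomial.leadingCoeff_X_add_C 1
  have hlc : (q.comp (X + C 1)).leadingCoeff = q.leadingCoeff := by
    rw [Polynomial.leadingCoeff_comp (by rw [e1]; norm_num), e2, one_pow, mul_one]
  have hcomp0 : q.comp (X + C 1) ≠ 0 := by
    intro hz
    apply hq
    rw [← Polynomial.leadingCoeff_eq_zero, ← hlc, hz, leadingCoeff_zero]
  have hnd : (q.comp (X + C 1)).natDegree = q.natDegree := by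
    rw [Polynomial.natDegree_comp, e1, mul_one]
  have hdeg : (q.comp (X + C 1)).degree = q.degree := by
    rw [Polynomial.degree_eq_natDegree hcomp0, Polynomial.degree_eq_natDegree hq, hnd]
  have hlt := Polynomial.degree_sub_lt hdeg hcomp0 hlc
  by_cases hz : q.comp (X + C 1) - q = 0
  · rw [hz]
    simpa using Nat.pos_of_ne_zero h0
  · have := Polynomial.natDegree_lt_natDegree hz hlt
    omega

lemma fwdDiff_iter_poly (n : ℕ) : ∀ q : ℚ[X], q.natDegree ≤ n →
    ∀ x : ℚ, (Δ_[(1:ℚ)])^[n + 1] (fun t => q.eval t) x = 0 := by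
  induction n with
  | zero =>
    intro q hq x
    obtain ⟨a, rfl⟩ := Polynomial.natDegree_eq_zero.mp (Nat.le_zero.mp hq)
    simp [fwdDiff]
  | succ n IH =>
    intro q hq x
    have hstep : (Δ_[(1:ℚ)]) (fun t => q.eval t) = fun t => (q.comp (X + C 1) - q).eval t := by
      funext t
      simp [fwdDiff, Polynomial.eval_comp]
    rw [Function.iterate_succ_apply, hstep]
    apply IH
    by_cases hq0 : q = 0
    · simp [hq0]
    by_cases hnd : q.natDegree = 0
    · obtain ⟨a, rfl⟩ := Polynomial.natDegree_eq_zero.mp hnd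
      simp
    · have := natDegree_shift_sub_lt q hq0 hnd
      omega

lemma key_fd (n : ℕ) (q : ℚ[X]) (hq : q.natDegree ≤ n) (x : ℚ) :
    ∑ j ∈ range (n + 2), (-1 : ℚ) ^ j * ((n + 1).choose j : ℚ) * q.eval (x - j) = 0 := by
  have h0 := fwdDiff_iter_eq_sum_shift (1 : ℚ) (fun t => q.eval t) (n + 1) (x - (n + 1))
  rw [fwdDiff_iter_poly n q hq] at h0
  rw [← Finset.sum_range_reflect]
  refine (Finset.sum_congr rfl ?_).trans h0.symm
  intro k hk
  rw [Finset.mem_range] at hk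
  have hk' : k ≤ n + 1 := by omega
  have e1 : n + 2 - 1 - k = n + 1 - k := by omega
  rw [zsmul_eq_mul, e1]
  have harg : x - ((n + 1 - k : ℕ) : ℚ) = x - (↑n + 1 : ℚ) + k • (1:ℚ) := by
    push_cast [Nat.cast_sub hk']
    ring
  rw [Nat.choose_symm hk', harg]
  push_cast
  ring

noncomputable def qpoly (d i : ℕ) : ℚ[X] :=
  C ((d.factorial : ℚ)⁻¹) * ∏ j ∈ range d, (X + C ((d : ℚ) - i - j))

noncomputable def rpoly (i : ℕ) : ℚ[X] :=
  C ((i.factorial : ℚ)⁻¹) * ∏ j ∈ range i, (X - C ((1 : ℚ) + j))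

lemma qpoly_eval (d i : ℕ) (x : ℚ) :
    (qpoly d i).eval x = (∏ j ∈ range d, (x + (d : ℚ) - i - j)) / (d.factorial : ℚ) := by
  simp only [qpoly, eval_mul, eval_C, eval_prod, eval_add, eval_X]
  rw [div_eq_inv_mul]
  congr 1
  exact Finset.prod_congr rfl fun j _ => by ring

lemma rpoly_eval (i : ℕ) (x : ℚ) :
    (rpoly i).eval x = (∏ j ∈ range i, (x - 1 - j)) / (i.factorial : ℚ) := by
  simp only [rpoly, eval_mul, eval_C, eval_prod, eval_sub, eval_X]
  rw [div_eq_inv_mul]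
  congr 1
  exact Finset.prod_congr rfl fun j _ => by ring

lemma qpoly_natDegree_le (d i : ℕ) : (qpoly d i).natDegree ≤ d := by
  refine (Polynomial.natDegree_mul_le).trans ?_
  rw [Polynomial.natDegree_C, zero_add]
  refine (Polynomial.natDegree_prod_le _ _).trans ?_
  refine (Finset.sum_le_sum fun j _ => (Polynomial.natDegree_X_add_C _).le).trans ?_
  simp

lemma rpoly_natDegree_le (i : ℕ) : (rpoly i).natDegree ≤ i := by
  refine (Polynomial.natDegree_mul_le).trans ?_
  rw [Polynomial.natDegree_C, zero_add]
  refine (Polynomial.natDegree_prod_le _ _).trans ?_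
  refine (Finset.sum_le_sum fun j _ => (Polynomial.natDegree_X_sub_C _).le).trans ?_
  simp

lemma qpoly_root (d i : ℕ) (x : ℚ) (t : ℕ) (ht : t < d) (hx : x + (d : ℚ) - i - t = 0) :
    (qpoly d i).eval x = 0 := by
  rw [qpoly_eval]
  rw [Finset.prod_eq_zero (Finset.mem_range.mpr ht) (by linarith), zero_div]

lemma rpoly_root (i : ℕ) (x : ℚ) (t : ℕ) (ht : t < i) (hx : x - 1 - t = 0) :
    (rpoly i).eval x = 0 := by
  rw [rpoly_eval]
  rw [Finset.prod_eq_zero (Finset.mem_range.mpr ht) hx, zero_div]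

lemma prod_add_one_fact (n : ℕ) : ∏ j ∈ range n, ((j : ℚ) + 1) = (n.factorial : ℚ) := by
  rw [← Finset.prod_range_add_one_eq_factorial, Nat.cast_prod]
  push_cast
  rfl

lemma prod_cast_fact (n : ℕ) : ∏ j ∈ range n, ((n : ℚ) - j) = (n.factorial : ℚ) := by
  rw [← Finset.prod_range_reflect, ← prod_add_one_fact n]
  apply Finset.prod_congr rfl
  intro j hj
  rw [Finset.mem_range] at hj
  have : ((n - 1 - j : ℕ) : ℚ) = (n : ℚ) - 1 - j := by
    push_cast [Nat.cast_sub (by omega : j ≤ n - 1), Nat.cast_sub (by omega : 1 ≤ n)]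
    ring
  rw [this]
  ring

lemma prod_neg_fact (n : ℕ) : ∏ j ∈ range n, (-1 - (j : ℚ)) = (-1) ^ n * (n.factorial : ℚ) := by
  have : ∀ j ∈ range n, (-1 - (j : ℚ)) = (-1) * ((j : ℚ) + 1) := fun j _ => by ring
  rw [Finset.prod_congr rfl this, Finset.prod_mul_distrib, Finset.prod_const]
  rw [Finset.card_range, prod_add_one_fact]

lemma qpoly_eval_self (d i : ℕ) : (qpoly d i).eval (i : ℚ) = 1 := by
  rw [qpoly_eval]
  have : ∀ j ∈ range d, ((i : ℚ) + d - i - j) = (d : ℚ) - j := fun j _ => by ring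
  rw [Finset.prod_congr rfl this, prod_cast_fact, div_self]
  exact_mod_cast d.factorial_ne_zero

lemma qpoly_eval_low (d i : ℕ) : (qpoly d i).eval ((i : ℚ) - (d + 1)) = (-1) ^ d := by
  rw [qpoly_eval]
  have : ∀ j ∈ range d, ((i : ℚ) - (d + 1) + d - i - j) = -1 - (j : ℚ) := fun j _ => by ring
  rw [Finset.prod_congr rfl this, prod_neg_fact, mul_div_assoc, div_self, mul_one]
  exact_mod_cast d.factorial_ne_zero

lemma rpoly_eval_zero (i : ℕ) : (rpoly i).eval 0 = (-1) ^ i := by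
  rw [rpoly_eval]
  have : ∀ j ∈ range i, ((0 : ℚ) - 1 - j) = -1 - (j : ℚ) := fun j _ => by ring
  rw [Finset.prod_congr rfl this, prod_neg_fact, mul_div_assoc, div_self, mul_one]
  exact_mod_cast i.factorial_ne_zero

noncomputable def psum (a : ℕ → ℚ) (m : ℕ) : ℚ[X] :=
  ∑ g ∈ range m, C (a g) * X ^ g

lemma psum_coeff (a : ℕ → ℚ) (m k : ℕ) :
    (psum a m).coeff k = if k < m then a k else 0 := by
  simp only [psum, Polynomial.finset_sum_coeff, Polynomial.coeff_C_mul, Polynomial.coeff_X_pow,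
    mul_ite, mul_one, mul_zero]
  rw [Finset.sum_ite_eq (range m) k a]
  simp [Finset.mem_range]

lemma one_sub_X_pow (n m : ℕ) (hnm : n < m) :
    ((1 : ℚ[X]) - X) ^ n = psum (fun b => (-1) ^ b * (n.choose b : ℚ)) m := by
  have h1 : ((1 : ℚ[X]) - X) = (-X) + 1 := by ring
  rw [h1, add_pow]
  rw [psum]
  rw [← Finset.sum_subset (Finset.range_subset_range.mpr (by omega : n + 1 ≤ m))]
  · apply Finset.sum_congr rfl
    intro k hk
    rw [one_pow, mul_one, neg_pow]
    rw [map_mul, map_pow, map_neg, map_one, Polynomial.C_eq_natCast]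
    ring
  · intro k _ hk
    rw [Finset.mem_range, not_lt] at hk
    rw [Nat.choose_eq_zero_of_lt (by omega)]
    simp

lemma coeff_psum_mul (a e : ℕ → ℚ) (m k : ℕ) (hk : k < m) :
    (psum a m * psum e m).coeff k = ∑ g ∈ range (k + 1), a g * e (k - g) := by
  rw [Polynomial.coeff_mul, Finset.Nat.sum_antidiagonal_eq_sum_range_succ_mk]
  apply Finset.sum_congr rfl
  intro g hg
  rw [Finset.mem_range] at hg
  rw [psum_coeff, psum_coeff, if_pos (by omega), if_pos (by omega)]

lemma dvdA (d i : ℕ) (hi : i ≤ d) :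
    (X : ℚ[X]) ^ (d + 2) ∣
      psum (fun g => (qpoly d i).eval (g : ℚ)) (d + 2) * (1 - X) ^ (d + 1) - X ^ i := by
  rw [X_pow_dvd_iff]
  intro k hk
  rw [coeff_sub, one_sub_X_pow (d + 1) (d + 2) (by omega),
    coeff_psum_mul _ _ _ _ hk, coeff_X_pow]
  -- goal: ∑ g ∈ range (k+1), eval ↑g * ((-1)^(k-g) * C(d+1,k-g)) - ite (i = k) 1 0 = 0
  rw [sub_eq_zero]
  rcases lt_or_ge k i with hki | hki
  · rw [if_neg (by omega)]
    apply Finset.sum_eq_zero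
    intro g hg
    rw [Finset.mem_range] at hg
    have hg' : g < i := by omega
    rw [qpoly_root d i _ (g + d - i) (by omega) (by push_cast [Nat.cast_sub (by omega : i ≤ g + d)]; ring), zero_mul]
  · -- k ≥ i : reindex
    have hre : ∑ g ∈ range (k + 1), (qpoly d i).eval (g : ℚ) * ((-1 : ℚ) ^ (k - g) * ((d+1).choose (k - g) : ℚ))
        = ∑ j ∈ range (k + 1), (-1 : ℚ) ^ j * ((d+1).choose j : ℚ) * (qpoly d i).eval ((k : ℚ) - j) := by
      rw [← Finset.sum_range_reflect]
      apply Finset.sum_congr rfl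
      intro j hj
      rw [Finset.mem_range] at hj
      have h1 : k + 1 - 1 - j = k - j := by omega
      have h2 : k - (k - j) = j := by omega
      have h3 : ((k - j : ℕ) : ℚ) = (k : ℚ) - j := by
        push_cast [Nat.cast_sub (by omega : j ≤ k)]; ring
      rw [h1, h2, h3]
      ring
    rw [hre]
    have hsplit := Finset.sum_range_add_sum_Ico
      (fun j => (-1 : ℚ) ^ j * ((d+1).choose j : ℚ) * (qpoly d i).eval ((k : ℚ) - j))
      (by omega : k + 1 ≤ d + 2)
    have hfd := key_fd d (qpoly d i) (qpoly_natDegree_le d i) (k : ℚ)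
    rcases eq_or_lt_of_le hki with heq | hlt
    · -- k = i
      subst heq
      rw [if_pos rfl]
      have hico : ∑ j ∈ Ico (i + 1) (d + 2),
          (-1 : ℚ) ^ j * ((d+1).choose j : ℚ) * (qpoly d i).eval ((i : ℚ) - j) = -1 := by
        rw [Finset.sum_eq_single_of_mem (d + 1) (by rw [Finset.mem_Ico]; omega)]
        · have hc : (((d + 1 : ℕ) : ℚ)) = (d : ℚ) + 1 := by push_cast; ring
          rw [Nat.choose_self, hc, qpoly_eval_low d i, Nat.cast_one, mul_one, ← pow_add]
          exact Odd.neg_one_pow ⟨d, by ring⟩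
        · intro j hj hne
          rw [Finset.mem_Ico] at hj
          rw [qpoly_root d i _ (d - j) (by omega) (by push_cast [Nat.cast_sub (by omega : j ≤ d)]; ring), mul_zero]
      linarith [hsplit, hfd, hico]
    · -- k > i
      rw [if_neg (by omega)]
      have hico : ∑ j ∈ Ico (k + 1) (d + 2),
          (-1 : ℚ) ^ j * ((d+1).choose j : ℚ) * (qpoly d i).eval ((k : ℚ) - j) = 0 := by
        apply Finset.sum_eq_zero
        intro j hj
        rw [Finset.mem_Ico] at hj
        rw [qpoly_root d i _ (k + d - i - j)
          (by omega)
          (by push_cast [Nat.cast_sub (by omega : j ≤ k + d - i), Nat.cast_sub (by omega : i ≤ k + d)]; ring), mul_zero]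
      linarith [hsplit, hfd, hico]

lemma dvdB' (d i : ℕ) (hi : i ≤ d) :
    (X : ℚ[X]) ^ (d + 2) ∣
      psum (fun g => (rpoly i).eval (g : ℚ)) (d + 2) * (1 - X) ^ (i + 1)
        - (C ((-1 : ℚ) ^ i) * (1 - X) ^ (i + 1) + X ^ (i + 1)) := by
  rw [X_pow_dvd_iff]
  intro k hk
  rw [coeff_sub, coeff_add, one_sub_X_pow (i + 1) (d + 2) (by omega),
    coeff_psum_mul _ _ _ _ hk, coeff_C_mul, psum_coeff, if_pos hk, coeff_X_pow]
  rw [sub_eq_zero]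
  rcases le_or_gt k i with hki | hki
  · -- k ≤ i : only g = 0 survives
    rw [Finset.sum_eq_single_of_mem 0 (Finset.mem_range.mpr (by omega))]
    · rw [if_neg (by omega), Nat.cast_zero, rpoly_eval_zero, Nat.sub_zero]
      ring
    · intro g hg hg0
      rw [Finset.mem_range] at hg
      rw [rpoly_root i _ (g - 1) (by omega) (by push_cast [Nat.cast_sub (by omega : 1 ≤ g)]; ring), zero_mul]
  · -- k ≥ i + 1
    have hre : ∑ g ∈ range (k + 1), (rpoly i).eval (g : ℚ) * ((-1 : ℚ) ^ (k - g) * ((i+1).choose (k - g) : ℚ))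
        = ∑ j ∈ range (k + 1), (-1 : ℚ) ^ j * ((i+1).choose j : ℚ) * (rpoly i).eval ((k : ℚ) - j) := by
      rw [← Finset.sum_range_reflect]
      apply Finset.sum_congr rfl
      intro j hj
      rw [Finset.mem_range] at hj
      have h1 : k + 1 - 1 - j = k - j := by omega
      have h2 : k - (k - j) = j := by omega
      have h3 : ((k - j : ℕ) : ℚ) = (k : ℚ) - j := by
        push_cast [Nat.cast_sub (by omega : j ≤ k)]; ring
      rw [h1, h2, h3]
      ring
    rw [hre]
    have hsplit := Finset.sum_range_add_sum_Ico
      (fun j => (-1 : ℚ) ^ j * ((i+1).choose j : ℚ) * (rpoly i).eval ((k : ℚ) - j))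
      (by omega : i + 2 ≤ k + 1)
    have hfd := key_fd i (rpoly i) (rpoly_natDegree_le i) (k : ℚ)
    have hico : ∑ j ∈ Ico (i + 2) (k + 1),
        (-1 : ℚ) ^ j * ((i+1).choose j : ℚ) * (rpoly i).eval ((k : ℚ) - j) = 0 := by
      apply Finset.sum_eq_zero
      intro j hj
      rw [Finset.mem_Ico] at hj
      rw [Nat.choose_eq_zero_of_lt (by omega), Nat.cast_zero, mul_zero, zero_mul]
    have hlhs : ∑ j ∈ range (k + 1),
        (-1 : ℚ) ^ j * ((i+1).choose j : ℚ) * (rpoly i).eval ((k : ℚ) - j) = 0 := by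
      rw [← hsplit, hfd, hico, add_zero]
    rw [hlhs]
    rcases eq_or_lt_of_le (Nat.succ_le_of_lt hki) with heq | hlt
    · rw [if_pos (by omega), ← heq, Nat.choose_self, Nat.cast_one, mul_one, ← pow_add]
      rw [Odd.neg_one_pow ⟨i, by omega⟩]
      ring
    · rw [if_neg (by omega), Nat.choose_eq_zero_of_lt (by omega), Nat.cast_zero]
      ring

theorem fstar_hstar_relation (d : ℕ) (p : Polynomial ℚ)
    (hdeg : p.natDegree = d)
    (hint : ∀ m : ℕ, ∃ z : ℤ, p.eval (m : ℚ) = (z : ℚ))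
    (f h : ℕ → ℚ)
    (hf : ∀ g : ℚ, p.eval g =
      ∑ i ∈ Finset.range (d + 1),
        f i * ((∏ j ∈ Finset.range i, (g - 1 - (j : ℚ))) / (i.factorial : ℚ)))
    (hh : ∀ g : ℚ, p.eval g =
      ∑ i ∈ Finset.range (d + 1),
        h i * ((∏ j ∈ Finset.range d, (g + (d : ℚ) - (i : ℚ) - (j : ℚ))) / (d.factorial : ℚ))) :
    ∀ z : ℚ,
      (∑ i ∈ Finset.range (d + 1), h i * z ^ i) =
        p.eval 0 * (1 - z) ^ (d + 1)
          + ∑ i ∈ Finset.range (d + 1), f i * z ^ (i + 1) * (1 - z) ^ (d - i) := by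
  have hp0 : p.eval 0 = ∑ i ∈ range (d + 1), f i * (-1) ^ i := by
    rw [hf 0]
    refine Finset.sum_congr rfl fun i _ => ?_
    congr 1
    have e : ∀ j ∈ range i, ((0 : ℚ) - 1 - j) = -1 - (j : ℚ) := fun j _ => by ring
    rw [Finset.prod_congr rfl e, prod_neg_fact, mul_div_assoc, div_self
      (by exact_mod_cast i.factorial_ne_zero), mul_one]
  have hPh : psum (fun g => p.eval (g : ℚ)) (d + 2)
      = ∑ i ∈ range (d + 1), C (h i) * psum (fun g => (qpoly d i).eval (g : ℚ)) (d + 2) := by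
    simp only [psum, Finset.mul_sum]
    rw [Finset.sum_comm]
    refine Finset.sum_congr rfl fun g _ => ?_
    have e : p.eval (g : ℚ) = ∑ i ∈ range (d + 1), h i * (qpoly d i).eval (g : ℚ) := by
      rw [hh (g : ℚ)]
      exact Finset.sum_congr rfl fun i _ => by rw [qpoly_eval]
    rw [e, map_sum, Finset.sum_mul]
    refine Finset.sum_congr rfl fun i _ => ?_
    rw [C_mul, mul_assoc]
  have hPf : psum (fun g => p.eval (g : ℚ)) (d + 2)
      = ∑ i ∈ range (d + 1), C (f i) * psum (fun g => (rpoly i).eval (g : ℚ)) (d + 2) := by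
    simp only [psum, Finset.mul_sum]
    rw [Finset.sum_comm]
    refine Finset.sum_congr rfl fun g _ => ?_
    have e : p.eval (g : ℚ) = ∑ i ∈ range (d + 1), f i * (rpoly i).eval (g : ℚ) := by
      rw [hf (g : ℚ)]
      exact Finset.sum_congr rfl fun i _ => by rw [rpoly_eval]
    rw [e, map_sum, Finset.sum_mul]
    refine Finset.sum_congr rfl fun i _ => ?_
    rw [C_mul, mul_assoc]
  set PP := psum (fun g => p.eval (g : ℚ)) (d + 2) with hPP
  set AA : ℚ[X] := ∑ i ∈ range (d + 1), C (h i) * X ^ i with hAA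
  set BB : ℚ[X] := C (p.eval 0) * (1 - X) ^ (d + 1)
      + ∑ i ∈ range (d + 1), C (f i) * (X ^ (i + 1) * (1 - X) ^ (d - i)) with hBB
  have hdvd1 : (X : ℚ[X]) ^ (d + 2) ∣ PP * (1 - X) ^ (d + 1) - AA := by
    rw [hPh, hAA, Finset.sum_mul, ← Finset.sum_sub_distrib]
    refine Finset.dvd_sum fun i hi => ?_
    rw [mul_assoc, ← mul_sub]
    exact Dvd.dvd.mul_left (dvdA d i (by rw [Finset.mem_range] at hi; omega)) _
  have hdvdBi : ∀ i ∈ range (d + 1), (X : ℚ[X]) ^ (d + 2) ∣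
      psum (fun g => (rpoly i).eval (g : ℚ)) (d + 2) * (1 - X) ^ (d + 1)
        - (C ((-1 : ℚ) ^ i) * (1 - X) ^ (d + 1) + X ^ (i + 1) * (1 - X) ^ (d - i)) := by
    intro i hi
    have hi' : i ≤ d := by rw [Finset.mem_range] at hi; omega
    have hpow : ((1 : ℚ[X]) - X) ^ (i + 1) * (1 - X) ^ (d - i) = (1 - X) ^ (d + 1) := by
      rw [← pow_add]; congr 1; omega
    have hd2 := (dvdB' d i hi').mul_right ((1 - X) ^ (d - i))
    rwa [sub_mul, add_mul, mul_assoc, mul_assoc, hpow] at hd2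
  have hdvd2 : (X : ℚ[X]) ^ (d + 2) ∣ PP * (1 - X) ^ (d + 1) - BB := by
    have hrw : PP * (1 - X) ^ (d + 1) - BB
        = ∑ i ∈ range (d + 1), C (f i) *
          (psum (fun g => (rpoly i).eval (g : ℚ)) (d + 2) * (1 - X) ^ (d + 1)
            - (C ((-1 : ℚ) ^ i) * (1 - X) ^ (d + 1) + X ^ (i + 1) * (1 - X) ^ (d - i))) := by
      rw [hPf, hBB, hp0, map_sum, Finset.sum_mul, Finset.sum_mul, ← Finset.sum_add_distrib,
        ← Finset.sum_sub_distrib]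
      refine Finset.sum_congr rfl fun i _ => ?_
      rw [C_mul]
      ring
    rw [hrw]
    exact Finset.dvd_sum fun i hi => Dvd.dvd.mul_left (hdvdBi i hi) _
  have hdvd3 : (X : ℚ[X]) ^ (d + 2) ∣ BB - AA := by
    have h3 := dvd_sub hdvd1 hdvd2
    have e : PP * (1 - X) ^ (d + 1) - AA - (PP * (1 - X) ^ (d + 1) - BB) = BB - AA := by ring
    rwa [e] at h3
  have hAdeg : AA.natDegree ≤ d := by
    refine Polynomial.natDegree_sum_le_of_forall_le _ _ fun i hi => ?_
    refine Polynomial.natDegree_mul_le.trans ?_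
    rw [Finset.mem_range] at hi
    simp only [Polynomial.natDegree_C, Polynomial.natDegree_X_pow, zero_add]
    omega
  have hu : ((1 : ℚ[X]) - X).natDegree ≤ 1 :=
    le_trans (Polynomial.natDegree_sub_le _ _) (by simp)
  have hBdeg : BB.natDegree ≤ d + 1 := by
    refine le_trans (Polynomial.natDegree_add_le _ _) (max_le ?_ ?_)
    · refine Polynomial.natDegree_mul_le.trans ?_
      rw [Polynomial.natDegree_C, zero_add]
      refine Polynomial.natDegree_pow_le.trans ?_
      calc (d + 1) * ((1 : ℚ[X]) - X).natDegree ≤ (d + 1) * 1 := by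
            exact Nat.mul_le_mul_left _ hu
        _ = d + 1 := by omega
    · refine Polynomial.natDegree_sum_le_of_forall_le _ _ fun i hi => ?_
      rw [Finset.mem_range] at hi
      refine Polynomial.natDegree_mul_le.trans ?_
      rw [Polynomial.natDegree_C, zero_add]
      refine Polynomial.natDegree_mul_le.trans ?_
      rw [Polynomial.natDegree_X_pow]
      have := Polynomial.natDegree_pow_le (p := (1 : ℚ[X]) - X) (n := d - i)
      have h2 : (d - i) * ((1 : ℚ[X]) - X).natDegree ≤ (d - i) * 1 := Nat.mul_le_mul_left _ hu
      omega
  have hzero : BB - AA = 0 := by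
    by_contra hne
    have h4 := Polynomial.natDegree_le_of_dvd hdvd3 hne
    rw [Polynomial.natDegree_X_pow] at h4
    have h5 : (BB - AA).natDegree ≤ d + 1 :=
      le_trans (Polynomial.natDegree_sub_le _ _) (max_le hBdeg (hAdeg.trans (by omega)))
    omega
  have hEq : AA = BB := (sub_eq_zero.mp hzero).symm
  intro z
  have hev := congrArg (Polynomial.eval z) hEq
  rw [hAA, hBB] at hev
  simp only [Polynomial.eval_finset_sum, Polynomial.eval_mul, Polynomial.eval_add,
    Polynomial.eval_sub, Polynomial.eval_pow, Polynomial.eval_one, Polynomial.eval_X,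
    Polynomial.eval_C] at hev
  rw [hev]
  congr 1
  exact Finset.sum_congr rfl fun i _ => by ring
end

section
/- For every natural number n ≥ 2, the sequence i ↦ C(n+1, 2(i-1)) for i = 1, …, ⌊(n+3)/2⌋ is logarithmically concave: C(n+1, 2(i-1))² ≥ C(n+1, 2(i-2)) · C(n+1, 2i) for all applicable i. -/
open Finset

lemma choose_step (m k : ℕ) :
    Nat.choose m k * Nat.choose m (k + 2) ≤ Nat.choose m (k + 1) ^ 2 := by
  have hpos : 0 < (k + 1) * (k + 2) := by positivity
  refine Nat.le_of_mul_le_mul_right ?_ hpos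
  have h1 : Nat.choose m (k + 1) * (k + 1) = Nat.choose m k * (m - k) :=
    Nat.choose_succ_right_eq m k
  have h2 : Nat.choose m (k + 2) * (k + 2) = Nat.choose m (k + 1) * (m - (k + 1)) :=
    Nat.choose_succ_right_eq m (k + 1)
  calc Nat.choose m k * Nat.choose m (k + 2) * ((k + 1) * (k + 2))
      = (Nat.choose m k * (m - (k + 1))) * (Nat.choose m (k + 1) * (k + 1)) := by
        rw [show Nat.choose m k * Nat.choose m (k + 2) * ((k + 1) * (k + 2)) =
            Nat.choose m k * (Nat.choose m (k + 2) * (k + 2)) * (k + 1) from by ring, h2]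
        ring
    _ ≤ (Nat.choose m (k + 1) * (k + 2)) * (Nat.choose m (k + 1) * (k + 1)) := by
        apply Nat.mul_le_mul_right
        calc Nat.choose m k * (m - (k + 1)) ≤ Nat.choose m k * (m - k) :=
              Nat.mul_le_mul_left _ (by omega)
          _ = Nat.choose m (k + 1) * (k + 1) := h1.symm
          _ ≤ Nat.choose m (k + 1) * (k + 2) := Nat.mul_le_mul_left _ (by omega)
    _ = Nat.choose m (k + 1) ^ 2 * ((k + 1) * (k + 2)) := by ring
  
lemma choose_step2 (m l : ℕ) :
    Nat.choose m l * Nat.choose m (l + 4) ≤ Nat.choose m (l + 2) ^ 2 := by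
  by_cases hc : Nat.choose m (l + 2) = 0
  · have : Nat.choose m (l + 4) = 0 := by
      rw [Nat.choose_eq_zero_iff] at *; omega
    simp [this]
  · have hcpos : 0 < Nat.choose m (l + 2) ^ 2 := by positivity
    refine Nat.le_of_mul_le_mul_right ?_ hcpos
    have h1 := choose_step m l
    have h2 := choose_step m (l + 1)
    have h3 := choose_step m (l + 2)
    calc Nat.choose m l * Nat.choose m (l + 4) * Nat.choose m (l + 2) ^ 2
        = (Nat.choose m l * Nat.choose m (l + 2)) *
          (Nat.choose m (l + 2) * Nat.choose m (l + 4)) := by ring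
      _ ≤ Nat.choose m (l + 1) ^ 2 * Nat.choose m (l + 3) ^ 2 := by
          apply Nat.mul_le_mul h1
          have := h3; simpa [show l + 2 + 2 = l + 4 by ring] using this
      _ = (Nat.choose m (l + 1) * Nat.choose m (l + 3)) ^ 2 := by ring
      _ ≤ (Nat.choose m (l + 2) ^ 2) ^ 2 := by
          apply Nat.pow_le_pow_left
          simpa [show l + 1 + 2 = l + 3 by ring] using h2
      _ = Nat.choose m (l + 2) ^ 2 * Nat.choose m (l + 2) ^ 2 := by ring

theorem hstar_log_concave (n : ℕ) (hn : 2 ≤ n) :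
    ∀ i : ℕ, 2 ≤ i → i + 1 ≤ (n + 3) / 2 →
      ((n + 1).choose (2 * (i - 1))) ^ 2 ≥
        (n + 1).choose (2 * (i - 2)) * (n + 1).choose (2 * i) := by
  intro i hi _
  have h1 : 2 * (i - 1) = 2 * (i - 2) + 2 := by omega
  have h2 : 2 * i = 2 * (i - 2) + 4 := by omega
  rw [h1, h2]
  exact choose_step2 (n + 1) (2 * (i - 2))
end

section
/- For natural numbers n and p with p ≤ n, the number OCPS(n, p) = ∑_{k=0}^{p-1} (-1)^{p-1-k} C(p-1, k) C(n-1+2k, 2k) is a positive integer; moreover OCPS(n, 1) = 1 and OCPS(n, n) = 2^{n-1} for n ≥ 1. -/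
open Finset

open PowerSeries

/-- The geometric series `1 + X + X² + ⋯` over `ℤ`. -/
noncomputable def gps : PowerSeries ℤ := PowerSeries.mk fun _ => 1

lemma one_sub_X_mul_gps : (1 - X) * gps = 1 := by
  ext n
  cases n <;> simp [gps, sub_mul, PowerSeries.coeff_succ_X_mul]

lemma hockey (m n : ℕ) : ∑ i ∈ range (n+1), (i + m).choose m = (n + m + 1).choose (m+1) := by
  induction n with
  | zero => simp
  | succ n ih =>
      rw [Finset.sum_range_succ, ih]
      have h1 : n + 1 + m = n + m + 1 := by omega
      rw [h1]
      have hp := Nat.choose_succ_succ' (n + m + 1) m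
      omega

lemma coeff_gps_pow (m n : ℕ) : (coeff n) (gps ^ (m+1)) = ((n + m).choose m : ℤ) := by
  induction m generalizing n with
  | zero => simp [gps]
  | succ m ih =>
      rw [pow_succ, PowerSeries.coeff_mul]
      rw [Finset.Nat.sum_antidiagonal_eq_sum_range_succ_mk]
      simp only [ih]
      simp [gps]
      rw [← Nat.cast_sum]
      rw [hockey m n]
      norm_cast

lemma key (q : ℕ) :
    (∑ k ∈ range (q+1), ((-1:ℤ)^(q-k) * (q.choose k : ℤ)) • gps ^ (2*k+1))
    = X ^ q * ∑ j ∈ range (q+1), ((q.choose j : ℤ)) • gps ^ (2*q+1-j) := by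
  set u : PowerSeries ℤ := 1 - X with hu
  have hug : u * gps = 1 := one_sub_X_mul_gps
  have cancel : ∀ a b : PowerSeries ℤ, a * u^(2*q+1) = b * u^(2*q+1) → a = b := by
    intro a b h
    have h2 : a * u^(2*q+1) * gps^(2*q+1) = b * u^(2*q+1) * gps^(2*q+1) := by rw [h]
    rwa [mul_assoc, mul_assoc, ← mul_pow, hug, one_pow, mul_one, mul_one] at h2
  apply cancel
  have hL : (∑ k ∈ range (q+1), ((-1:ℤ)^(q-k) * (q.choose k : ℤ)) • gps ^ (2*k+1)) * u^(2*q+1)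
      = (1 - u^2)^q := by
    rw [Finset.sum_mul]
    have h1u : (1 - u^2 : PowerSeries ℤ) = 1 + (-(u^2)) := by ring
    rw [h1u, add_pow]
    apply Finset.sum_congr rfl
    intro k hk
    have hk' : k ≤ q := Nat.lt_succ_iff.mp (Finset.mem_range.mp hk)
    have hgu : gps^(2*k+1) * u^(2*q+1) = u^(2*(q-k)) := by
      rw [show u^(2*q+1) = u^(2*k+1) * u^(2*(q-k)) by rw [← pow_add]; congr 1; omega]
      rw [← mul_assoc, ← mul_pow, mul_comm gps u, hug, one_pow, one_mul]
    rw [smul_mul_assoc, hgu, zsmul_eq_mul]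
    conv_rhs => rw [one_pow, one_mul, neg_pow, ← pow_mul]
    push_cast
    ring
  have hR : (X ^ q * ∑ j ∈ range (q+1), ((q.choose j : ℤ)) • gps ^ (2*q+1-j)) * u^(2*q+1)
      = X^q * (u + 1)^q := by
    rw [mul_assoc, Finset.sum_mul, add_pow]
    congr 1
    apply Finset.sum_congr rfl
    intro j hj
    have hj' : j ≤ q := Nat.lt_succ_iff.mp (Finset.mem_range.mp hj)
    have hgu : gps^(2*q+1-j) * u^(2*q+1) = u^j := by
      rw [show u^(2*q+1) = u^(2*q+1-j) * u^j by rw [← pow_add]; congr 1; omega]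
      rw [← mul_assoc, ← mul_pow, mul_comm gps u, hug, one_pow, one_mul]
    rw [smul_mul_assoc, hgu, zsmul_eq_mul]
    push_cast
    ring
  rw [hL, hR, ← mul_pow]
  congr 1
  rw [hu]
  ring

lemma pos_formula (n q : ℕ) (hqn : q + 1 ≤ n) :
    OCPS n (q+1)
      = ∑ j ∈ range (q+1),
          (q.choose j : ℤ) * (((n-(q+1)) + (2*q - j)).choose (2*q-j) : ℤ) := by
  have h := congrArg (coeff (n-1)) (key q)
  rw [map_sum] at h
  have hL : ∀ k ∈ range (q+1),
      (coeff (n-1)) (((-1:ℤ)^(q-k) * (q.choose k : ℤ)) • gps ^ (2*k+1))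
        = (-1:ℤ)^(q-k) * (q.choose k : ℤ) * ((n-1+2*k).choose (2*k) : ℤ) := by
    intro k _
    rw [map_smul, smul_eq_mul, coeff_gps_pow, mul_assoc]
  rw [Finset.sum_congr rfl hL] at h
  have hd : n - 1 = (n - (q+1)) + q := by omega
  rw [hd, PowerSeries.coeff_X_pow_mul, map_sum] at h
  have hR : ∀ j ∈ range (q+1),
      (coeff (n-(q+1))) ((q.choose j : ℤ) • gps ^ (2*q+1-j))
        = (q.choose j : ℤ) * (((n-(q+1)) + (2*q-j)).choose (2*q-j) : ℤ) := by
    intro j hj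
    have hj' : j ≤ q := Nat.lt_succ_iff.mp (Finset.mem_range.mp hj)
    rw [show 2*q+1-j = (2*q-j)+1 by omega, map_smul, smul_eq_mul, coeff_gps_pow]
  rw [Finset.sum_congr rfl hR] at h
  rw [OCPS]
  simp only [Nat.add_sub_cancel]
  have hfix : ∀ k ∈ range (q+1),
      (-1:ℤ)^(q-k) * (q.choose k : ℤ) * ((n-1+2*k).choose (2*k) : ℤ)
        = (-1:ℤ)^(q-k) * (q.choose k : ℤ) * ((n-(q+1)+q+2*k).choose (2*k) : ℤ) := by
    intro k _
    rw [show n-1+2*k = n-(q+1)+q+2*k from by omega]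
  rw [Finset.sum_congr rfl hfix]
  exact h

theorem OCPS_pos_and_boundary (n p : ℕ) (hn : 1 ≤ n) (hp : 1 ≤ p) (hpn : p ≤ n) :
    0 < OCPS n p ∧ OCPS n 1 = 1 ∧ OCPS n n = 2 ^ (n - 1) := by
  refine ⟨?_, ?_, ?_⟩
  · obtain ⟨q, rfl⟩ : ∃ q, p = q + 1 := ⟨p - 1, by omega⟩
    rw [pos_formula n q hpn]
    apply Finset.sum_pos'
    · intro j _
      positivity
    · refine ⟨q, Finset.mem_range.mpr (Nat.lt_succ_self q), ?_⟩
      rw [show 2*q - q = q by omega, Nat.choose_self]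
      have h1 : 0 < ((n - (q+1)) + q).choose q := Nat.choose_pos (by omega)
      have : (0:ℤ) < (((n - (q+1)) + q).choose q : ℤ) := by exact_mod_cast h1
      simpa using this
  · simp [OCPS]
  · obtain ⟨q, rfl⟩ : ∃ q, n = q + 1 := ⟨n - 1, by omega⟩
    rw [pos_formula (q+1) q le_rfl]
    simp only [Nat.sub_self, Nat.zero_add, Nat.choose_self, Nat.cast_one, mul_one]
    rw [← Nat.cast_sum, Nat.sum_range_choose]
    simp
end
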